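/- arXiv:2006.01500 — 8 statements merged into one kernel-verified Lean document; each statement's English description precedes it below -/
import Mathlib

section
/- There exists a nowhere dense class 𝒞 of finite graphs that does not have the strong Erdős–Hajnal property; that is, for every δ > 0 there is a graph G in 𝒞 with n ≥ 2 vertices such that G contains no two disjoint vertex subsets A, B, each of size at least δn, with A complete or anticomplete to B. -/
open SimpleGraph

/-- A class of finite graphs, represented as a set of graphs on `Fin n` for each `n`. -/
abbrev GraphClass : Type := ∀ n : ℕ, Set (SimpleGraph (Fin n))

/-- The complete graph on `t` vertices is a depth-`r` minor of `G`: there are `t`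
pairwise disjoint nonempty branch sets, each inducing a connected subgraph of radius
at most `r`, that are pairwise joined by an edge of `G`. -/
def CompleteDepthMinor {V : Type} (G : SimpleGraph V) (r t : ℕ) : Prop :=
  ∃ B : Fin t → Set V,
    (∀ i, (B i).Nonempty) ∧
    (∀ i j, i ≠ j → Disjoint (B i) (B j)) ∧
    (∀ i, ∃ v : B i, ∀ u : B i, ∃ p : (G.induce (B i)).Walk v u, p.length ≤ r) ∧
    (∀ i j, i ≠ j → ∃ u ∈ B i, ∃ w ∈ B j, G.Adj u w)

/-- A class of finite graphs is nowhere dense if for every radius `r` there is a `t`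
such that the complete graph on `t` vertices is not a depth-`r` minor of any graph
in the class. -/
def NowhereDense (𝒞 : GraphClass) : Prop :=
  ∀ r : ℕ, ∃ t : ℕ, ∀ n : ℕ, ∀ G ∈ 𝒞 n, ¬ CompleteDepthMinor G r t

/-!
Label the pairs of an `n = c N`-element vertex set independently and uniformly by `Fin N` and
keep the pairs labelled `0` as edges, so that probabilities become numbers of labellings. A fixed
pair of disjoint `k`-sets is then complete with probability `N ^ (-k²)` and anticomplete with
probability `(1 - 1/N) ^ k²`, which beats the `(n choose k)²` choices of the pair, while the
expected number of cycles of length at most `j` is bounded independently of `N`. Deleting the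
vertices of the short cycles leaves a graph on `m` vertices of girth greater than `j` without pure
pairs of size `k ≥ m / (2 j)`. Girth greater than `6 r + 3` excludes `K₃` as a depth-`r` minor, since three
branch sets of radius `r` joined pairwise by edges contain a cycle of length at most `6 r + 3`;
so these graphs, one for each `j`, form a nowhere dense class.
-/

open Finset
open Function (Injective)

theorem two_pow_mul_pow_le_succ_pow {M a e : ℕ} (hM : 0 < M) (h : M * a ≤ e) :
    2 ^ a * M ^ e ≤ (M + 1) ^ e := by
  have hbernoulli : 2 * M ^ M ≤ (M + 1) ^ M := by
    have := pow_add_mul_le_add_pow (a := M) (b := 1) (by positivity) (by positivity) M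
    rwa [Nat.cast_id, mul_one, mul_pow_sub_one hM.ne', ← two_mul] at this
  obtain ⟨s, rfl⟩ := Nat.exists_eq_add_of_le h
  calc 2 ^ a * M ^ (M * a + s) = (2 * M ^ M) ^ a * M ^ s := by ring
    _ ≤ ((M + 1) ^ M) ^ a * (M + 1) ^ s := by gcongr; omega
    _ = (M + 1) ^ (M * a + s) := by ring

theorem four_mul_choose_sq_mul_pow_le {n k N : ℕ} (hN : 2 ≤ N)
    (h : (N - 1) * (2 * n + 2) ≤ k ^ 2) : 4 * n.choose k ^ 2 * (N - 1) ^ k ^ 2 ≤ N ^ k ^ 2 := by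
  calc 4 * n.choose k ^ 2 * (N - 1) ^ k ^ 2 ≤ 2 ^ (2 * n + 2) * (N - 1) ^ k ^ 2 := by
        grw [Nat.choose_le_two_pow n k]; ring_nf; rfl
    _ ≤ (N - 1 + 1) ^ k ^ 2 := two_pow_mul_pow_le_succ_pow (by omega) h
    _ = N ^ k ^ 2 := by rw [Nat.sub_add_cancel (by omega)]

theorem injective_sym2_finRotate {V : Type*} {ℓ : ℕ} (hℓ : 3 ≤ ℓ) {c : Fin ℓ → V}
    (hc : Injective c) : Injective fun i => s(c i, c (finRotate ℓ i)) := by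
  obtain ⟨m, rfl⟩ : ∃ m, ℓ = m + 3 := ⟨ℓ - 3, by omega⟩
  intro i j h
  simp only [Sym2.eq_iff, hc.eq_iff, finRotate_apply] at h
  rcases h with ⟨h, -⟩ | ⟨rfl, h⟩
  · exact h
  · -- `j + 1 + 1 = j` would force `2 = 0` in `Fin (m + 3)`
    rw [add_assoc, add_eq_left] at h
    have := congrArg Fin.val h
    simp [Fin.val_add, Nat.mod_eq_of_lt] at this

theorem card_image_sym2_product {V : Type*} [DecidableEq V] {A B : Finset V} (hAB : Disjoint A B) :
    #((A ×ˢ B).image fun ab => s(ab.1, ab.2)) = #A * #B := by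
  rw [card_image_of_injOn, card_product]
  rintro ⟨a, b⟩ hab ⟨a', b'⟩ hab' h
  simp only [coe_product, Set.mem_prod, mem_coe] at hab hab'
  rcases Sym2.eq_iff.1 h with ⟨rfl, rfl⟩ | ⟨rfl, -⟩
  · rfl
  · exact absurd hab'.2 (Finset.disjoint_left.1 hAB hab.1)

section Counting

variable {α β V : Type*} [Fintype α] [DecidableEq α] [Fintype β] [DecidableEq β]
  [Fintype V] [DecidableEq V]

theorem card_filter_forall_mem_mul_pow (S : Finset α) (t : Finset β) :
    #{f : α → β | ∀ a ∈ S, f a ∈ t} * Fintype.card β ^ #S =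
      #t ^ #S * Fintype.card β ^ Fintype.card α := by
  have : ({f : α → β | ∀ a ∈ S, f a ∈ t} : Finset _) =
      Fintype.piFinset fun a => if a ∈ S then t else univ := by
    ext f
    simp only [mem_filter, mem_univ, true_and, Fintype.mem_piFinset]
    refine forall_congr' fun a => ?_
    split_ifs with ha <;> simp [ha]
  rw [this, Fintype.card_piFinset, prod_apply_ite, prod_const, prod_const, card_univ,
    filter_mem_eq_inter, univ_inter, mul_right_comm, mul_assoc, ← pow_add, filter_not,
    filter_mem_eq_inter, univ_inter, ← compl_eq_univ_sdiff, card_add_card_compl]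

theorem card_filter_exists_pair_mul_pow_le (k : ℕ) (t : Finset β) :
    #{f : Sym2 V → β | ∃ A B : Finset V, Disjoint A B ∧ k ≤ #A ∧ k ≤ #B ∧
        ∀ a ∈ A, ∀ b ∈ B, f s(a, b) ∈ t} * Fintype.card β ^ k ^ 2 ≤
      (Fintype.card V).choose k ^ 2 * #t ^ k ^ 2 * Fintype.card β ^ Fintype.card (Sym2 V) := by
  set pairs : Finset (Finset V × Finset V) :=
    {AB ∈ powersetCard k univ ×ˢ powersetCard k univ | Disjoint AB.1 AB.2}
  let slots (AB : Finset V × Finset V) : Finset (Sym2 V) :=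
    (AB.1 ×ˢ AB.2).image fun ab => s(ab.1, ab.2)
  have hslots : ∀ AB ∈ pairs, #(slots AB) = k ^ 2 := by
    simp only [pairs, mem_filter, mem_product, mem_powersetCard]
    rintro ⟨A, B⟩ ⟨⟨⟨-, hA⟩, -, hB⟩, hAB⟩
    rw [card_image_sym2_product hAB, hA, hB, sq]
  have hsub : ({f : Sym2 V → β | ∃ A B : Finset V, Disjoint A B ∧ k ≤ #A ∧ k ≤ #B ∧
        ∀ a ∈ A, ∀ b ∈ B, f s(a, b) ∈ t} : Finset _) ⊆
      pairs.biUnion fun AB => {f | ∀ e ∈ slots AB, f e ∈ t} := by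
    simp only [subset_iff, mem_filter, mem_univ, true_and, mem_biUnion]
    rintro f ⟨A, B, hAB, hA, hB, hf⟩
    obtain ⟨A', hA', rfl⟩ := exists_subset_card_eq hA
    obtain ⟨B', hB', hB'k⟩ := exists_subset_card_eq hB
    refine ⟨(A', B'), ?_, ?_⟩
    · simp [pairs, hB'k, disjoint_of_subset_left hA' (disjoint_of_subset_right hB' hAB)]
    · simp only [slots, mem_image, mem_product, Prod.exists]
      rintro _ ⟨a, b, ⟨ha, hb⟩, rfl⟩
      exact hf a (hA' ha) b (hB' hb)
  calc _ ≤ (∑ AB ∈ pairs, #{f : Sym2 V → β | ∀ e ∈ slots AB, f e ∈ t}) *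
        Fintype.card β ^ k ^ 2 := by
        gcongr; exact (card_le_card hsub).trans card_biUnion_le
    _ = ∑ AB ∈ pairs, #t ^ k ^ 2 * Fintype.card β ^ Fintype.card (Sym2 V) := by
        rw [sum_mul]
        refine sum_congr rfl fun AB hAB => ?_
        rw [← hslots AB hAB, card_filter_forall_mem_mul_pow]
    _ ≤ (Fintype.card V).choose k ^ 2 *
          (#t ^ k ^ 2 * Fintype.card β ^ Fintype.card (Sym2 V)) := by
        rw [sum_const, smul_eq_mul]
        gcongr
        exact (card_filter_le _ _).trans (by simp [sq])
    _ = _ := by ring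

end Counting

namespace SimpleGraph

variable {V : Type*} {G : SimpleGraph V}

def HasPurePair (G : SimpleGraph V) (k : ℕ) : Prop :=
  ∃ A B : Finset V, Disjoint A B ∧ k ≤ #A ∧ k ≤ #B ∧
    ((∀ a ∈ A, ∀ b ∈ B, G.Adj a b) ∨ (∀ a ∈ A, ∀ b ∈ B, ¬ G.Adj a b))

theorem HasPurePair.map {W : Type*} {H : SimpleGraph W} (f : G ↪g H) {k : ℕ}
    (h : G.HasPurePair k) : H.HasPurePair k := by
  obtain ⟨A, B, hAB, hA, hB, hpure⟩ := h
  refine ⟨A.map f.toEmbedding, B.map f.toEmbedding, (disjoint_map _).2 hAB, by simpa, by simpa, ?_⟩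
  simpa [f.map_adj_iff] using hpure

theorem lt_egirth_iff {n : ℕ} :
    (n : ℕ∞) < G.egirth ↔ ∀ a (w : G.Walk a a), w.IsCycle → n < w.length := by
  rw [← ENat.add_one_le_iff (ENat.natCast_ne_top n), le_egirth]
  norm_cast

theorem egirth_le_length_add_one_of_notMem_edges {u v : V} (h : G.Adj u v) (p : G.Walk v u)
    (he : s(u, v) ∉ p.edges) : G.egirth ≤ p.length + 1 := by
  classical
  have hc : (Walk.cons h p.bypass).IsCycle :=
    (Walk.cons_isCycle_iff _ h).2 ⟨p.bypass_isPath, fun h' => he (p.edges_bypass_subset_edges h')⟩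
  calc G.egirth ≤ (Walk.cons h p.bypass).length := egirth_le_length hc
    _ ≤ p.length + 1 := by
      rw [Walk.length_cons]; exact_mod_cast Nat.succ_le_succ p.length_bypass_le_length

theorem exists_walk_of_induce_radius_le {s : Set V} {r : ℕ}
    (h : ∃ v : s, ∀ u : s, ∃ p : (G.induce s).Walk v u, p.length ≤ r) {x y : V} (hx : x ∈ s)
    (hy : y ∈ s) : ∃ p : G.Walk x y, p.length ≤ 2 * r ∧ ∀ w ∈ p.support, w ∈ s := by
  obtain ⟨v, hv⟩ := h
  obtain ⟨p, hp⟩ := hv ⟨x, hx⟩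
  obtain ⟨q, hq⟩ := hv ⟨y, hy⟩
  refine ⟨(p.reverse.append q).map (Embedding.induce s).toHom, ?_, ?_⟩
  · exact (Walk.length_map _ _).trans_le (by rw [Walk.length_append, Walk.length_reverse]; omega)
  · intro w hw
    obtain ⟨w', -, rfl⟩ := List.mem_map.1 (Walk.support_map _ _ ▸ hw)
    exact w'.2

section CycleTuples

variable [Fintype V]

/-- Every cycle of length `ℓ` appears here `2ℓ` times, once for each starting vertex and
orientation. -/
noncomputable def cycleTuples (G : SimpleGraph V) (ℓ : ℕ) : Finset (Fin ℓ → V) :=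
  open Classical in {c | Injective c ∧ ∀ i, G.Adj (c i) (c (finRotate ℓ i))}

theorem mem_cycleTuples {ℓ : ℕ} {c : Fin ℓ → V} :
    c ∈ G.cycleTuples ℓ ↔ Injective c ∧ ∀ i, G.Adj (c i) (c (finRotate ℓ i)) := by
  simp [cycleTuples]

theorem Walk.IsCycle.getVert_mem_cycleTuples {a : V} {w : G.Walk a a} (hw : w.IsCycle) :
    (fun i : Fin w.length => w.getVert i) ∈ G.cycleTuples w.length := by
  refine mem_cycleTuples.2 ⟨fun i j hij => Fin.ext <| hw.getVert_injOn'
    (by simp only [Set.mem_ofPred_eq]; omega) (by simp only [Set.mem_ofPred_eq]; omega) hij,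
    fun i => ?_⟩
  have hrot : w.getVert (finRotate w.length i) = w.getVert (i + 1) := by
    have hval : (finRotate w.length i : ℕ) = (i + 1) % w.length := by
      rw [finRotate_apply, Fin.val_add]; simp
    rcases (show (i : ℕ) + 1 ≤ w.length from i.isLt).lt_or_eq with hi | hi
    · rw [hval, Nat.mod_eq_of_lt hi]
    · rw [hval, hi, Nat.mod_self, Walk.getVert_zero, Walk.getVert_length]
  rw [hrot]
  exact w.adj_getVert_succ i.isLt

variable [DecidableEq V]

theorem exists_cycle_cover (G : SimpleGraph V) (L : ℕ) :
    ∃ Z : Finset V, #Z ≤ L * ∑ ℓ ∈ Icc 3 L, #(G.cycleTuples ℓ) ∧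
      ∀ a (w : G.Walk a a), w.IsCycle → w.length ≤ L → a ∈ Z := by
  refine ⟨(Icc 3 L).biUnion fun ℓ => (G.cycleTuples ℓ).biUnion fun c => univ.image c, ?_, ?_⟩
  · rw [mul_sum]
    refine card_biUnion_le.trans (sum_le_sum fun ℓ hℓ => card_biUnion_le.trans ?_)
    calc ∑ c ∈ G.cycleTuples ℓ, #(univ.image c) ≤ ∑ _c ∈ G.cycleTuples ℓ, L :=
          sum_le_sum fun c _ => card_image_le.trans (by simpa using (mem_Icc.1 hℓ).2)
      _ = L * #(G.cycleTuples ℓ) := by rw [sum_const, smul_eq_mul, mul_comm]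
  · intro a w hw hL
    have h3 := hw.three_le_length
    simp only [mem_biUnion, mem_image, mem_univ, true_and, mem_Icc]
    exact ⟨w.length, ⟨h3, hL⟩, _, hw.getVert_mem_cycleTuples, ⟨0, by omega⟩, w.getVert_zero⟩

theorem exists_lt_egirth_not_hasPurePair_of_cycle_cover {Z : Finset V} {k L : ℕ}
    (hG : ¬ G.HasPurePair k) (hZ : ∀ a (w : G.Walk a a), w.IsCycle → w.length ≤ L → a ∈ Z) :
    ∃ H : SimpleGraph (Fin #Zᶜ), (L : ℕ∞) < H.egirth ∧ ¬ H.HasPurePair k := by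
  let φ : Fin #Zᶜ ↪ V := Zᶜ.equivFin.symm.toEmbedding.trans (Function.Embedding.subtype _)
  let ι : G.comap φ ↪g G := Embedding.comap φ G
  refine ⟨G.comap φ, lt_egirth_iff.2 fun a w hw => ?_, fun h => hG (h.map ι)⟩
  by_contra! hL
  have hφa : φ a ∈ Z := hZ _ (w.map ι.toHom)
    ((Walk.isCycle_map_iff_of_injective ι.injective).2 hw) ((Walk.length_map _ _).trans_le hL)
  exact mem_compl.1 (Zᶜ.equivFin.symm a).2 hφa

variable {N : ℕ} [NeZero N]

theorem card_filter_mem_cycleTuples_mul_pow_le {ℓ : ℕ} (hℓ : 3 ≤ ℓ) (c : Fin ℓ → V) :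
    #{f : Sym2 V → Fin N | c ∈ (fromEdgeSet {e | f e = 0}).cycleTuples ℓ} * N ^ ℓ ≤
      N ^ Fintype.card (Sym2 V) := by
  by_cases hc : Injective c
  · set S := univ.image fun i => s(c i, c (finRotate ℓ i))
    have hS : #S = ℓ := by
      rw [card_image_of_injective _ (injective_sym2_finRotate hℓ hc), card_univ, Fintype.card_fin]
    have hsub : ({f : Sym2 V → Fin N | c ∈ (fromEdgeSet {e | f e = 0}).cycleTuples ℓ} : Finset _)
        ⊆ ({f : Sym2 V → Fin N | ∀ e ∈ S, f e ∈ ({0} : Finset (Fin N))} : Finset _) := by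
      intro f
      simp only [mem_filter, mem_univ, true_and, mem_cycleTuples, fromEdgeSet_adj, S, mem_image,
        mem_singleton]
      rintro ⟨-, hf⟩ _ ⟨i, rfl⟩
      exact (hf i).1
    calc _ ≤ #{f : Sym2 V → Fin N | ∀ e ∈ S, f e ∈ ({0} : Finset (Fin N))} * N ^ #S := by
          rw [hS]; gcongr
      _ = N ^ Fintype.card (Sym2 V) := by
          simpa using card_filter_forall_mem_mul_pow S ({0} : Finset (Fin N))
  · simp [mem_cycleTuples, hc]

theorem sum_card_cycleTuples_mul_pow_le {ℓ : ℕ} (hℓ : 3 ≤ ℓ) :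
    (∑ f : Sym2 V → Fin N, #((fromEdgeSet {e | f e = 0}).cycleTuples ℓ)) * N ^ ℓ ≤
      Fintype.card V ^ ℓ * N ^ Fintype.card (Sym2 V) := by
  calc _ = ∑ c : Fin ℓ → V,
        #{f : Sym2 V → Fin N | c ∈ (fromEdgeSet {e | f e = 0}).cycleTuples ℓ} * N ^ ℓ := by
        rw [← sum_mul]
        congr 1
        simpa [bipartiteAbove, bipartiteBelow] using
          sum_card_bipartiteAbove_eq_sum_card_bipartiteBelow (s := univ) (t := univ)
            fun (f : Sym2 V → Fin N) c => c ∈ (fromEdgeSet {e | f e = 0}).cycleTuples ℓ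
    _ ≤ ∑ _c : Fin ℓ → V, N ^ Fintype.card (Sym2 V) :=
        sum_le_sum fun c _ => card_filter_mem_cycleTuples_mul_pow_le hℓ c
    _ = _ := by simp

theorem four_mul_sum_sum_card_cycleTuples_le {c L z : ℕ} (hV : Fintype.card V = c * N)
    (hcyc : 4 * ∑ ℓ ∈ Icc 3 L, c ^ ℓ ≤ z) :
    4 * ∑ f : Sym2 V → Fin N, ∑ ℓ ∈ Icc 3 L, #((fromEdgeSet {e | f e = 0}).cycleTuples ℓ) ≤
      z * N ^ Fintype.card (Sym2 V) := by
  have hN : 0 < N := Nat.pos_of_neZero N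
  rw [sum_comm]
  calc _ ≤ 4 * ∑ ℓ ∈ Icc 3 L, c ^ ℓ * N ^ Fintype.card (Sym2 V) := by
        gcongr with ℓ hℓ
        refine Nat.le_of_mul_le_mul_right (c := N ^ ℓ) ?_ (by positivity)
        calc _ ≤ Fintype.card V ^ ℓ * N ^ Fintype.card (Sym2 V) :=
              sum_card_cycleTuples_mul_pow_le (mem_Icc.1 hℓ).1
          _ = _ := by rw [hV]; ring
    _ ≤ z * N ^ Fintype.card (Sym2 V) := by rw [← sum_mul, ← mul_assoc]; gcongr

end CycleTuples

theorem four_mul_card_filter_exists_pair_le [Fintype V] [DecidableEq V] {N k : ℕ} [NeZero N]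
    (hpair : 4 * (Fintype.card V).choose k ^ 2 * (N - 1) ^ k ^ 2 ≤ N ^ k ^ 2)
    {t : Finset (Fin N)} (ht : #t ≤ N - 1) :
    4 * #{f : Sym2 V → Fin N | ∃ A B : Finset V, Disjoint A B ∧ k ≤ #A ∧ k ≤ #B ∧
        ∀ a ∈ A, ∀ b ∈ B, f s(a, b) ∈ t} ≤ N ^ Fintype.card (Sym2 V) := by
  have h := card_filter_exists_pair_mul_pow_le (V := V) k t
  rw [Fintype.card_fin] at h
  refine Nat.le_of_mul_le_mul_right (c := N ^ k ^ 2) ?_ (pow_pos (Nat.pos_of_neZero N) _)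
  calc _ ≤ 4 * (Fintype.card V).choose k ^ 2 * #t ^ k ^ 2 * N ^ Fintype.card (Sym2 V) := by
        rw [mul_assoc]; grw [h]; ring_nf; rfl
    _ ≤ N ^ k ^ 2 * N ^ Fintype.card (Sym2 V) := by grw [ht, hpair]
    _ = _ := mul_comm _ _

theorem exists_not_hasPurePair_sum_card_cycleTuples_le [Fintype V] [DecidableEq V]
    {N c k L z : ℕ} (hN : 2 ≤ N) (hV : Fintype.card V = c * N)
    (hpair : 4 * (Fintype.card V).choose k ^ 2 * (N - 1) ^ k ^ 2 ≤ N ^ k ^ 2)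
    (hcyc : 4 * ∑ ℓ ∈ Icc 3 L, c ^ ℓ ≤ z) :
    ∃ G : SimpleGraph V, ¬ G.HasPurePair k ∧ ∑ ℓ ∈ Icc 3 L, #(G.cycleTuples ℓ) ≤ z := by
  have : NeZero N := ⟨by omega⟩
  set P := Fintype.card (Sym2 V)
  let graph (f : Sym2 V → Fin N) : SimpleGraph V := fromEdgeSet {e | f e = 0}
  let pureIn (t : Finset (Fin N)) : Finset (Sym2 V → Fin N) :=
    {f | ∃ A B : Finset V, Disjoint A B ∧ k ≤ #A ∧ k ≤ #B ∧ ∀ a ∈ A, ∀ b ∈ B, f s(a, b) ∈ t}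
  let cycles (f : Sym2 V → Fin N) : ℕ := ∑ ℓ ∈ Icc 3 L, #((graph f).cycleTuples ℓ)
  let manyCycles : Finset (Sym2 V → Fin N) := {f | z < cycles f}
  have hmany : 4 * #manyCycles < N ^ P := by
    have hmarkov : #manyCycles * (z + 1) ≤ ∑ f, cycles f :=
      calc #manyCycles * (z + 1) = #manyCycles • (z + 1) := rfl
        _ ≤ ∑ f ∈ manyCycles, cycles f :=
          card_nsmul_le_sum _ _ _ fun f hf => (mem_filter.1 hf).2
        _ ≤ ∑ f, cycles f := sum_le_sum_of_subset (subset_univ _)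
    refine Nat.lt_of_mul_lt_mul_right (a := z + 1) ?_
    calc 4 * #manyCycles * (z + 1) ≤ z * N ^ P := by
          grw [mul_assoc, hmarkov, four_mul_sum_sum_card_cycleTuples_le hV hcyc]
      _ < N ^ P * (z + 1) := by nlinarith [pow_pos (show 0 < N by omega) P]
  have hbad : #(pureIn {0} ∪ pureIn {0}ᶜ ∪ manyCycles) < #(univ : Finset (Sym2 V → Fin N)) := by
    have h₁ : 4 * #(pureIn {0}) ≤ N ^ P :=
      four_mul_card_filter_exists_pair_le hpair (by simp; omega)
    have h₂ : 4 * #(pureIn {0}ᶜ) ≤ N ^ P :=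
      four_mul_card_filter_exists_pair_le hpair (by simp [card_compl])
    have hΩ : #(univ : Finset (Sym2 V → Fin N)) = N ^ P := by simp [P]
    rw [hΩ]
    grw [card_union_le, card_union_le]
    omega
  obtain ⟨f, -, hf⟩ := exists_mem_notMem_of_card_lt_card hbad
  simp only [mem_union, not_or] at hf
  obtain ⟨⟨hcomplete, hanticomplete⟩, hfew⟩ := hf
  refine ⟨graph f, ?_, by simpa [manyCycles] using hfew⟩
  rintro ⟨A, B, hAB, hA, hB, hpure | hpure⟩
  · refine hcomplete (mem_filter.2 ⟨mem_univ _, A, B, hAB, hA, hB, fun a ha b hb => ?_⟩)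
    simpa using ((fromEdgeSet_adj _).1 (hpure a ha b hb)).1
  · refine hanticomplete (mem_filter.2 ⟨mem_univ _, A, B, hAB, hA, hB, fun a ha b hb => ?_⟩)
    have hab : a ≠ b := fun h => Finset.disjoint_left.1 hAB ha (h ▸ hb)
    simpa [graph, fromEdgeSet_adj, hab] using hpure a ha b hb

theorem exists_lt_egirth_not_hasPurePair {j : ℕ} (hj : 0 < j) :
    ∃ (m k : ℕ) (G : SimpleGraph (Fin m)), 2 ≤ m ∧ k * j ≤ m ∧ (j : ℕ∞) < G.egirth ∧
      ¬ G.HasPurePair k := by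
  -- Edge probability `1 / N` on `n = c N` vertices: about `∑ c ^ ℓ` short cycle tuples are
  -- expected, at most `N / 4` by the choice of `N`, and `k = 8 j N` makes `k² ≥ 2 n N`.
  set c := 16 * j ^ 2
  set N := 4 * ∑ ℓ ∈ range (j + 1), c ^ ℓ
  set k := 8 * j * N
  have hN : 4 ≤ N := by
    have : 1 ≤ ∑ ℓ ∈ range (j + 1), c ^ ℓ := by rw [sum_range_succ']; simp
    omega
  have hpair : (N - 1) * (2 * (c * N) + 2) ≤ k ^ 2 := by
    calc (N - 1) * (2 * (c * N) + 2) ≤ N * (2 * (c * N) + 2) := by gcongr; omega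
      _ ≤ k ^ 2 := by
        have : 1 ≤ j ^ 2 * N := Nat.one_le_iff_ne_zero.2 (by positivity)
        simp only [c, k]; nlinarith
  have hcyc : 4 * ∑ ℓ ∈ Icc 3 j, c ^ ℓ ≤ N := by
    refine Nat.mul_le_mul_left 4 (sum_le_sum_of_subset fun ℓ hℓ => ?_)
    simp only [mem_Icc, mem_range] at hℓ ⊢
    omega
  obtain ⟨G, hG, hGcyc⟩ := exists_not_hasPurePair_sum_card_cycleTuples_le (V := Fin (c * N))
    (by omega) (Fintype.card_fin _) (by simpa using four_mul_choose_sq_mul_pow_le (by omega) hpair)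
    hcyc
  obtain ⟨Z, hZcard, hcover⟩ := exists_cycle_cover G j
  obtain ⟨H, hH, hHpure⟩ := exists_lt_egirth_not_hasPurePair_of_cycle_cover hG hcover
  have hZ : #Z ≤ j * N := hZcard.trans (by gcongr)
  have hm : #Zᶜ = c * N - #Z := by rw [card_compl, Fintype.card_fin]
  have : j * N + k * j + 2 ≤ c * N := by simp only [c, k]; nlinarith
  exact ⟨_, k, H, by omega, by omega, hH, hHpure⟩

end SimpleGraph

theorem CompleteDepthMinor.mono {V : Type} {G : SimpleGraph V} {r s t : ℕ}
    (h : CompleteDepthMinor G r t) (hst : s ≤ t) : CompleteDepthMinor G r s := by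
  obtain ⟨B, hne, hdisj, hrad, hadj⟩ := h
  have hinj := Fin.castLE_injective hst
  exact ⟨B ∘ Fin.castLE hst, fun i => hne _, fun i j hij => hdisj _ _ (hinj.ne hij),
    fun i => hrad _, fun i j hij => hadj _ _ (hinj.ne hij)⟩

theorem CompleteDepthMinor.le_card {V : Type} [Fintype V] {G : SimpleGraph V} {r t : ℕ}
    (h : CompleteDepthMinor G r t) : t ≤ Fintype.card V := by
  obtain ⟨B, hne, hdisj, -, -⟩ := h
  refine Fintype.card_fin t ▸ Fintype.card_le_of_injective (fun i => (hne i).some) fun i j hij => ?_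
  by_contra hne'
  have hij : (hne i).some = (hne j).some := hij
  exact Set.disjoint_left.mp (hdisj i j hne') (hne i).some_mem (hij ▸ (hne j).some_mem)

theorem not_completeDepthMinor_three_of_lt_egirth {V : Type} {G : SimpleGraph V} {r : ℕ}
    (h : ((6 * r + 3 : ℕ) : ℕ∞) < G.egirth) : ¬ CompleteDepthMinor G r 3 := by
  rintro ⟨B, -, hdisj, hrad, hadj⟩
  have hB (i j : Fin 3) (hij : i ≠ j) {x : V} (hx : x ∈ B i) : x ∉ B j :=
    Set.disjoint_left.mp (hdisj i j hij) hx
  obtain ⟨a₀, ha₀, b₁, hb₁, h₀₁⟩ := hadj 0 1 (by decide)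
  obtain ⟨a₁, ha₁, b₂, hb₂, h₁₂⟩ := hadj 1 2 (by decide)
  obtain ⟨a₂, ha₂, b₀, hb₀, h₂₀⟩ := hadj 2 0 (by decide)
  obtain ⟨p₀, hp₀, hs₀⟩ := exists_walk_of_induce_radius_le (hrad 0) hb₀ ha₀
  obtain ⟨p₁, hp₁, hs₁⟩ := exists_walk_of_induce_radius_le (hrad 1) hb₁ ha₁
  obtain ⟨p₂, hp₂, hs₂⟩ := exists_walk_of_induce_radius_le (hrad 2) hb₂ ha₂
  set q := p₁.append (Walk.cons h₁₂ p₂)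
  have hq : b₀ ∉ q.support := by
    simp only [q, Walk.mem_support_append_iff, Walk.support_cons, List.mem_cons]
    rintro (hb | rfl | hb)
    · exact hB 0 1 (by decide) hb₀ (hs₁ _ hb)
    · exact hB 0 1 (by decide) hb₀ ha₁
    · exact hB 0 2 (by decide) hb₀ (hs₂ _ hb)
  have he : s(a₂, b₀) ∉ (p₀.append (Walk.cons h₀₁ q)).edges := by
    simp only [Walk.edges_append, Walk.edges_cons, List.mem_append, List.mem_cons, Sym2.eq_iff]
    rintro (he | (⟨h, -⟩ | ⟨h, -⟩) | he)
    · exact hB 2 0 (by decide) ha₂ (hs₀ _ (p₀.fst_mem_support_of_mem_edges he))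
    · exact hB 2 0 (by decide) ha₂ (h ▸ ha₀)
    · exact hB 2 1 (by decide) ha₂ (h ▸ hb₁)
    · exact hq (q.snd_mem_support_of_mem_edges he)
  have hlen : (p₀.append (Walk.cons h₀₁ q)).length + 1 ≤ 6 * r + 3 := by
    simp only [q, Walk.length_append, Walk.length_cons]; omega
  exact (egirth_le_length_add_one_of_notMem_edges h₂₀ _ he).trans
    (by exact_mod_cast hlen) |>.not_gt h

theorem nowhereDense_of_egirth (𝒞 : GraphClass)
    (h : ∀ g : ℕ, ∃ M : ℕ, ∀ n, ∀ G ∈ 𝒞 n, M < n → (g : ℕ∞) < G.egirth) : NowhereDense 𝒞 := by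
  intro r
  obtain ⟨M, hM⟩ := h (6 * r + 3)
  refine ⟨max 3 (M + 1), fun n G hG hminor => ?_⟩
  have hn : M < n := by simpa using (le_max_right _ _).trans hminor.le_card
  exact not_completeDepthMinor_three_of_lt_egirth (hM n G hG hn) (hminor.mono (le_max_left _ _))

theorem le_mul_of_mul_ceil_one_div_add_one_le {δ : ℝ} (hδ : 0 < δ) {k m : ℕ}
    (h : k * (⌈1 / δ⌉₊ + 1) ≤ m) : (k : ℝ) ≤ δ * m := by
  have hδj : 1 ≤ δ * (⌈1 / δ⌉₊ + 1) := by
    have := Nat.le_ceil (1 / δ)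
    rw [div_le_iff₀ hδ] at this
    nlinarith
  have h : (k : ℝ) * (⌈1 / δ⌉₊ + 1) ≤ m := by exact_mod_cast h
  nlinarith

theorem exists_nowhere_dense_without_strong_EH :
    ∃ 𝒞 : GraphClass, NowhereDense 𝒞 ∧
      ∀ δ : ℝ, 0 < δ → ∃ (n : ℕ) (G : SimpleGraph (Fin n)), G ∈ 𝒞 n ∧ 2 ≤ n ∧
        ¬ ∃ A B : Finset (Fin n), Disjoint A B ∧
            δ * (n : ℝ) ≤ (A.card : ℝ) ∧ δ * (n : ℝ) ≤ (B.card : ℝ) ∧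
            ((∀ a ∈ A, ∀ b ∈ B, G.Adj a b) ∨ (∀ a ∈ A, ∀ b ∈ B, ¬ G.Adj a b)) := by
  choose m k G hm hkm hgirth hpure using
    fun j : ℕ => exists_lt_egirth_not_hasPurePair (j := j + 1) j.succ_pos
  let 𝒞 : GraphClass := fun n =>
    {H | ⟨n, H⟩ ∈ Set.range fun j => (⟨m j, G j⟩ : Σ n, SimpleGraph (Fin n))}
  refine ⟨𝒞, nowhereDense_of_egirth 𝒞 fun g => ⟨(range (g + 1)).sup m, ?_⟩, fun δ hδ => ?_⟩
  · rintro n H ⟨j, hj⟩ hn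
    obtain ⟨rfl, ⟨⟩⟩ := Sigma.mk.inj_iff.1 hj
    have hgj : g < j + 1 := by
      by_contra! hjg
      exact hn.not_ge (le_sup (mem_range.2 (by omega)))
    exact (by exact_mod_cast hgj : (g : ℕ∞) < (j + 1 : ℕ)).trans (hgirth j)
  · set j := ⌈1 / δ⌉₊
    have hk : (k j : ℝ) ≤ δ * m j := le_mul_of_mul_ceil_one_div_add_one_le hδ (hkm j)
    refine ⟨m j, G j, ⟨j, rfl⟩, hm j, fun ⟨A, B, hAB, hA, hB, hAB'⟩ =>
      hpure j ⟨A, B, hAB, ?_, ?_, hAB'⟩⟩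
    · exact_mod_cast hk.trans hA
    · exact_mod_cast hk.trans hB
end

section
/- Let G be a finite graph, r a positive integer, c a positive real, and A a nonempty vertex subset of G. Then there is a subset S of V(G) with |S| ≤ wcol_{2r}(G)/c such that for every vertex v of G − S one has |N^r_{G−S}[v] ∩ A| ≤ c·|A|. -/
open SimpleGraph

/-- The set of vertices weakly `r`-reachable from `v` in the ordering of the vertices
given by the injective map `σ : V → ℕ`: vertices `u` such that there is a walk of
length at most `r` from `v` to `u` on which no vertex is smaller than `u`. -/
def WReachSet {V : Type} (G : SimpleGraph V) (σ : V → ℕ) (r : ℕ) (v : V) : Set V :=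
  {u | ∃ p : G.Walk v u, p.length ≤ r ∧ ∀ w ∈ p.support, σ u ≤ σ w}

/-- The `r`-th weak coloring number of a finite graph `G`: the least `k` such that for
some linear ordering of the vertices (given by an injective map `σ : V → ℕ`), every
vertex weakly `r`-reaches at most `k` vertices. -/
noncomputable def wcol {V : Type} [Fintype V] (G : SimpleGraph V) (r : ℕ) : ℕ :=
  sInf {k | ∃ σ : V → ℕ, Function.Injective σ ∧ ∀ v : V, (WReachSet G σ r v).ncard ≤ k}

/-- The `r`-ball around `v` avoiding `S`. -/
def Ball {V : Type} (G : SimpleGraph V) (r : ℕ) (S : Finset V) (v : V) : Set V :=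
  {u | ∃ p : G.Walk v u, p.length ≤ r ∧ ∀ w ∈ p.support, w ∉ S}

lemma mem_ball_of_mem_support {V : Type} (G : SimpleGraph V) (r : ℕ) (S : Finset V)
    {v x : V} (p : G.Walk v x) (hp : p.length ≤ r) (hpS : ∀ w ∈ p.support, w ∉ S) :
    ∀ w ∈ p.support, w ∈ Ball G r S v := by
  intro w hw
  obtain ⟨q, q', hpq⟩ := (Walk.mem_support_iff_exists_append).mp hw
  subst hpq
  refine ⟨q, ?_, fun x hx => hpS x ?_⟩
  · have := Walk.length_append q q'
    omega
  · rw [Walk.support_append]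
    exact List.mem_append_left _ hx

lemma wreach_of_ball {V : Type} (G : SimpleGraph V) (σ : V → ℕ) (r : ℕ) (S : Finset V)
    {v u a : V} (hu : u ∈ Ball G r S v) (ha : a ∈ Ball G r S v)
    (hmin : ∀ w ∈ Ball G r S v, σ u ≤ σ w) :
    u ∈ WReachSet G σ (2 * r) a := by
  obtain ⟨q, hq, hqS⟩ := hu
  obtain ⟨p, hp, hpS⟩ := ha
  refine ⟨p.reverse.append q, ?_, ?_⟩
  · rw [Walk.length_append, Walk.length_reverse]
    omega
  · intro w hw
    apply hmin
    rw [Walk.support_append] at hw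
    rcases List.mem_append.mp hw with h | h
    · rw [Walk.support_reverse, List.mem_reverse] at h
      exact mem_ball_of_mem_support G r S p hp hpS w h
    · exact mem_ball_of_mem_support G r S q hq hqS w (List.mem_of_mem_tail h)

theorem exists_hub_set_for_wcol
    {V : Type} [Fintype V] [DecidableEq V] (G : SimpleGraph V)
    (r : ℕ) (hr : 0 < r) (c : ℝ) (hc : 0 < c) (A : Finset V) (hA : A.Nonempty) :
    ∃ S : Finset V, (S.card : ℝ) ≤ (wcol G (2 * r) : ℝ) / c ∧
      ∀ v : V, v ∉ S →
        ((({u | ∃ p : G.Walk v u, p.length ≤ r ∧ ∀ w ∈ p.support, w ∉ S} : Set V)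
            ∩ (A : Set V)).ncard : ℝ) ≤ c * (A.card : ℝ) := by
  classical
  set k := wcol G (2 * r) with hk
  -- the defining set of `wcol` is nonempty, so the infimum is attained
  have hne : {m | ∃ σ : V → ℕ, Function.Injective σ ∧
      ∀ v : V, (WReachSet G σ (2 * r) v).ncard ≤ m}.Nonempty := by
    refine ⟨Fintype.card V, fun v => ((Fintype.equivFin V) v : ℕ), ?_, ?_⟩
    · intro a b hab
      exact (Fintype.equivFin V).injective (Fin.val_injective hab)
    · intro v
      calc (WReachSet G (fun v => ((Fintype.equivFin V) v : ℕ)) (2 * r) v).ncard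
          ≤ (Set.univ : Set V).ncard :=
            Set.ncard_le_ncard (Set.subset_univ _) (Set.finite_univ)
        _ = Fintype.card V := by rw [Set.ncard_univ, Nat.card_eq_fintype_card]
  obtain ⟨σ, hσinj, hσ⟩ := Nat.sInf_mem hne
  -- the weak reachability sets as finsets
  set W : V → Finset V := fun a => Finset.univ.filter (· ∈ WReachSet G σ (2 * r) a) with hWdef
  have hWcard : ∀ a, (W a).card ≤ k := by
    intro a
    have hcoe : ((W a : Finset V) : Set V) = WReachSet G σ (2 * r) a := by
      ext x; simp [hWdef]
    have := hσ a
    rwa [← hcoe, Set.ncard_coe_finset] at this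
  set Φ : Finset V → ℕ := fun S => ∑ a ∈ A, (S ∩ W a).card with hΦdef
  have hΦub : ∀ S, Φ S ≤ A.card * k := by
    intro S
    calc Φ S ≤ ∑ _a ∈ A, k := by
          refine Finset.sum_le_sum fun a _ => ?_
          exact le_trans (Finset.card_le_card (Finset.inter_subset_right)) (hWcard a)
      _ = A.card * k := by rw [Finset.sum_const, smul_eq_mul]
  -- main greedy construction
  have key : ∀ n : ℕ, ∀ S : Finset V, (Finset.univ \ S).card ≤ n →
      c * A.card * S.card ≤ (Φ S : ℝ) →
      ∃ T : Finset V, c * A.card * T.card ≤ (Φ T : ℝ) ∧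
        ∀ v : V, ((Ball G r T v ∩ (A : Set V)).ncard : ℝ) ≤ c * A.card := by
    intro n
    induction n with
    | zero =>
      intro S hS hinv
      refine ⟨S, hinv, fun v => ?_⟩
      by_contra hbad
      push_neg at hbad
      -- the ball is nonempty, giving a vertex outside S, contradicting univ \ S = ∅
      have hApos : (0:ℝ) < A.card := by exact_mod_cast hA.card_pos
      have hpos : (0:ℝ) < ((Ball G r S v ∩ (A : Set V)).ncard : ℝ) :=
        lt_trans (by positivity) hbad
      have hpos' : (Ball G r S v ∩ (A : Set V)).ncard ≠ 0 := by exact_mod_cast hpos.ne'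
      obtain ⟨u, hu⟩ := Set.nonempty_of_ncard_ne_zero hpos'
      obtain ⟨⟨p, hp, hpS⟩, -⟩ := hu
      have huS : u ∉ S := hpS u (Walk.end_mem_support p)
      have : u ∈ Finset.univ \ S := by simp [huS]
      have := Finset.card_pos.mpr ⟨u, this⟩
      omega
    | succ n ih =>
      intro S hS hinv
      by_cases hbad : ∃ v, c * A.card < ((Ball G r S v ∩ (A : Set V)).ncard : ℝ)
      · obtain ⟨v, hv⟩ := hbad
        -- B : the elements of A in the ball
        set B : Finset V := A.filter (· ∈ Ball G r S v) with hBdef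
        have hBcoe : (Ball G r S v ∩ (A : Set V)) = (B : Set V) := by
          ext x; simp [hBdef, and_comm]
        have hBcard : c * A.card < (B.card : ℝ) := by
          rwa [hBcoe, Set.ncard_coe_finset] at hv
        -- choose the σ-minimal vertex u of the ball
        set Bf : Finset V := Finset.univ.filter (· ∈ Ball G r S v) with hBfdef
        have hBfne : Bf.Nonempty := by
          have : (0:ℝ) < (B.card : ℝ) := lt_of_le_of_lt (by positivity) hBcard
          obtain ⟨x, hx⟩ := Finset.card_pos.mp (by exact_mod_cast this)
          exact ⟨x, by simp [hBfdef, (Finset.mem_filter.mp hx).2]⟩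
        obtain ⟨u, huBf, humin⟩ := Finset.exists_min_image Bf σ hBfne
        have huBall : u ∈ Ball G r S v := (Finset.mem_filter.mp huBf).2
        have humin' : ∀ w ∈ Ball G r S v, σ u ≤ σ w := by
          intro w hw
          exact humin w (by simp [hBfdef, hw])
        have huS : u ∉ S := by
          obtain ⟨p, hp, hpS⟩ := huBall
          exact hpS u (Walk.end_mem_support p)
        -- the counting step
        have hstep : Φ S + B.card ≤ Φ (insert u S) := by
          have hpt : ∀ a ∈ A, (S ∩ W a).card + (if a ∈ B then 1 else 0)
              ≤ ((insert u S) ∩ W a).card := by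
            intro a ha
            by_cases haB : a ∈ B
            · have haBall : a ∈ Ball G r S v := (Finset.mem_filter.mp haB).2
              have huW : u ∈ W a := by
                simp only [hWdef, Finset.mem_filter, Finset.mem_univ, true_and]
                exact wreach_of_ball G σ r S huBall haBall humin'
              rw [Finset.insert_inter_of_mem huW, if_pos haB,
                Finset.card_insert_of_notMem (fun h => huS (Finset.mem_inter.mp h).1)]
            · rw [if_neg haB]
              simp only [add_zero]
              exact Finset.card_le_card
                (Finset.inter_subset_inter (Finset.subset_insert u S) le_rfl)
          calc Φ S + B.card = ∑ a ∈ A, ((S ∩ W a).card + (if a ∈ B then 1 else 0)) := by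
                rw [Finset.sum_add_distrib, Finset.sum_ite_mem,
                  Finset.inter_eq_right.mpr (Finset.filter_subset _ _), Finset.sum_const,
                  smul_eq_mul, mul_one]
            _ ≤ ∑ a ∈ A, ((insert u S) ∩ W a).card := Finset.sum_le_sum hpt
            _ = Φ (insert u S) := rfl
        -- new invariant
        have hinv' : c * A.card * ((insert u S).card : ℝ) ≤ (Φ (insert u S) : ℝ) := by
          rw [Finset.card_insert_of_notMem huS]
          push_cast
          have : (Φ S : ℝ) + (B.card : ℝ) ≤ (Φ (insert u S) : ℝ) := by exact_mod_cast hstep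
          nlinarith
        have hcard' : (Finset.univ \ insert u S).card ≤ n := by
          have h1 : Finset.univ \ insert u S = (Finset.univ \ S).erase u := by
            ext x
            simp only [Finset.mem_sdiff, Finset.mem_erase, Finset.mem_insert,
              Finset.mem_univ, true_and, not_or]
          have h2 : u ∈ Finset.univ \ S := by simp [huS]
          rw [h1, Finset.card_erase_of_mem h2]
          have := Finset.card_pos.mpr ⟨u, h2⟩
          omega
        exact ih (insert u S) hcard' hinv'
      · push_neg at hbad
        exact ⟨S, hinv, hbad⟩
  obtain ⟨T, hTinv, hTgood⟩ := key (Finset.univ \ (∅ : Finset V)).card ∅ le_rfl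
    (by simp [hΦdef])
  refine ⟨T, ?_, fun v _ => hTgood v⟩
  have hub := hΦub T
  have hApos : (0:ℝ) < A.card := by exact_mod_cast hA.card_pos
  have h1 : c * A.card * T.card ≤ (A.card : ℝ) * k := by
    calc c * A.card * T.card ≤ (Φ T : ℝ) := hTinv
      _ ≤ (A.card : ℝ) * k := by exact_mod_cast hub
  rw [le_div_iff₀ hc]
  nlinarith
end

section
/- Let H be a finite graph, α and β positive reals, and A₀, B₀ vertex subsets of H. Suppose (X₀, Y₀) is a good pair in (A₀, B₀) and (X₁, Y₁) is a good pair in (A₁, B₁), where A₁ = A₀ \ (X₀ ∪ N_H[Y₀]) and B₁ = B₀ \ (Y₀ ∪ N_H[X₀]). Then (X₀ ∪ X₁, Y₀ ∪ Y₁) is a good pair in (A₀, B₀). -/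
open SimpleGraph
open scoped Classical

/-- The closed neighborhood of a vertex set `X` in a graph `H`: all vertices of `X`
together with all vertices adjacent to a vertex of `X`. -/
noncomputable def closedNbhd {V : Type} [Fintype V] [DecidableEq V]
    (H : SimpleGraph V) (X : Finset V) : Finset V :=
  X ∪ Finset.univ.filter (fun u => ∃ x ∈ X, H.Adj x u)

/-- The pair `(X, Y)` is good in `(A₁, B₁)` with respect to `α` and `β`:
`X ⊆ A₁`, `Y ⊆ B₁`, `X` is anticomplete to `Y` in `H`, `|N_H[X] ∩ B₁| ≤ β·|X|`,
and `|N_H[Y] ∩ A₁| ≤ α·|Y|`. -/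
def GoodPair {V : Type} [Fintype V] [DecidableEq V] (H : SimpleGraph V) (α β : ℝ)
    (A₁ B₁ X Y : Finset V) : Prop :=
  X ⊆ A₁ ∧ Y ⊆ B₁ ∧
  Disjoint X Y ∧ (∀ x ∈ X, ∀ y ∈ Y, ¬ H.Adj x y) ∧
  ((closedNbhd H X ∩ B₁).card : ℝ) ≤ β * (X.card : ℝ) ∧
  ((closedNbhd H Y ∩ A₁).card : ℝ) ≤ α * (Y.card : ℝ)



lemma mem_closedNbhd {V : Type} [Fintype V] [DecidableEq V]
    (H : SimpleGraph V) (X : Finset V) (u : V) :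
    u ∈ closedNbhd H X ↔ u ∈ X ∨ ∃ x ∈ X, H.Adj x u := by
  simp [closedNbhd]

lemma subset_closedNbhd {V : Type} [Fintype V] [DecidableEq V]
    (H : SimpleGraph V) (X : Finset V) : X ⊆ closedNbhd H X :=
  Finset.subset_union_left

lemma closedNbhd_union {V : Type} [Fintype V] [DecidableEq V]
    (H : SimpleGraph V) (X Y : Finset V) :
    closedNbhd H (X ∪ Y) = closedNbhd H X ∪ closedNbhd H Y := by
  ext u
  simp [mem_closedNbhd, Finset.mem_union]
  aesop

theorem goodPair_union {V : Type} [Fintype V] [DecidableEq V]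
    (H : SimpleGraph V) (α β : ℝ) (hα : 0 < α) (hβ : 0 < β)
    (A₀ B₀ X₀ Y₀ X₁ Y₁ : Finset V)
    (h₀ : GoodPair H α β A₀ B₀ X₀ Y₀)
    (h₁ : GoodPair H α β (A₀ \ (X₀ ∪ closedNbhd H Y₀)) (B₀ \ (Y₀ ∪ closedNbhd H X₀)) X₁ Y₁) :
    GoodPair H α β A₀ B₀ (X₀ ∪ X₁) (Y₀ ∪ Y₁) := by
  obtain ⟨hX₀A, hY₀B, hdis₀, hanti₀, hNX₀, hNY₀⟩ := h₀
  obtain ⟨hX₁A, hY₁B, hdis₁, hanti₁, hNX₁, hNY₁⟩ := h₁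
  have hX₁ : ∀ x ∈ X₁, x ∈ A₀ ∧ x ∉ X₀ ∧ x ∉ closedNbhd H Y₀ := by
    intro x hx
    have := hX₁A hx
    simp only [Finset.mem_sdiff, Finset.mem_union, not_or] at this
    tauto
  have hY₁ : ∀ y ∈ Y₁, y ∈ B₀ ∧ y ∉ Y₀ ∧ y ∉ closedNbhd H X₀ := by
    intro y hy
    have := hY₁B hy
    simp only [Finset.mem_sdiff, Finset.mem_union, not_or] at this
    tauto
  -- anticomplete pieces
  have anti₁₀ : ∀ x ∈ X₁, ∀ y ∈ Y₀, ¬ H.Adj x y := by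
    intro x hx y hy hadj
    exact (hX₁ x hx).2.2 ((mem_closedNbhd H Y₀ x).2 (Or.inr ⟨y, hy, hadj.symm⟩))
  have anti₀₁ : ∀ x ∈ X₀, ∀ y ∈ Y₁, ¬ H.Adj x y := by
    intro x hx y hy hadj
    exact (hY₁ y hy).2.2 ((mem_closedNbhd H X₀ y).2 (Or.inr ⟨x, hx, hadj⟩))
  have dXX : Disjoint X₀ X₁ := by
    rw [Finset.disjoint_right]
    intro x hx
    exact (hX₁ x hx).2.1
  have dYY : Disjoint Y₀ Y₁ := by
    rw [Finset.disjoint_right]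
    intro y hy
    exact (hY₁ y hy).2.1
  have dX₀Y₁ : Disjoint X₀ Y₁ := by
    rw [Finset.disjoint_left]
    intro x hx hx'
    exact (hY₁ x hx').2.2 (subset_closedNbhd H X₀ hx)
  have dX₁Y₀ : Disjoint X₁ Y₀ := by
    rw [Finset.disjoint_left]
    intro x hx hx'
    exact (hX₁ x hx).2.2 (subset_closedNbhd H Y₀ hx')
  refine ⟨?_, ?_, ?_, ?_, ?_, ?_⟩
  · exact Finset.union_subset hX₀A (fun x hx => (hX₁ x hx).1)
  · exact Finset.union_subset hY₀B (fun y hy => (hY₁ y hy).1)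
  · rw [Finset.disjoint_union_left]
    exact ⟨Finset.disjoint_union_right.2 ⟨hdis₀, dX₀Y₁⟩,
      Finset.disjoint_union_right.2 ⟨dX₁Y₀, hdis₁⟩⟩
  · intro x hx y hy
    rcases Finset.mem_union.1 hx with hx | hx <;> rcases Finset.mem_union.1 hy with hy | hy
    · exact hanti₀ x hx y hy
    · exact anti₀₁ x hx y hy
    · exact anti₁₀ x hx y hy
    · exact hanti₁ x hx y hy
  · -- β bound
    have hsub : closedNbhd H (X₀ ∪ X₁) ∩ B₀ ⊆
        (closedNbhd H X₀ ∩ B₀) ∪ (closedNbhd H X₁ ∩ (B₀ \ (Y₀ ∪ closedNbhd H X₀))) := by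
      intro u hu
      rw [Finset.mem_inter, closedNbhd_union, Finset.mem_union] at hu
      obtain ⟨h1, hB⟩ := hu
      rcases h1 with h1 | h1
      · exact Finset.mem_union_left _ (Finset.mem_inter.2 ⟨h1, hB⟩)
      by_cases h0 : u ∈ closedNbhd H X₀
      · exact Finset.mem_union_left _ (Finset.mem_inter.2 ⟨h0, hB⟩)
      refine Finset.mem_union_right _ (Finset.mem_inter.2 ⟨h1, ?_⟩)
      rw [Finset.mem_sdiff, Finset.mem_union]
      refine ⟨hB, ?_⟩
      rintro (hY | h0')
      · rcases (mem_closedNbhd H X₁ u).1 h1 with h | ⟨x, hx, hadj⟩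
        · exact Finset.disjoint_left.1 dX₁Y₀ h hY
        · exact anti₁₀ x hx u hY hadj
      · exact h0 h0'
    calc ((closedNbhd H (X₀ ∪ X₁) ∩ B₀).card : ℝ)
        ≤ (((closedNbhd H X₀ ∩ B₀) ∪ (closedNbhd H X₁ ∩ (B₀ \ (Y₀ ∪ closedNbhd H X₀)))).card : ℝ) := by
          exact_mod_cast Finset.card_le_card hsub
      _ ≤ ((closedNbhd H X₀ ∩ B₀).card : ℝ) + ((closedNbhd H X₁ ∩ (B₀ \ (Y₀ ∪ closedNbhd H X₀))).card : ℝ) := by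
          exact_mod_cast Finset.card_union_le _ _
      _ ≤ β * X₀.card + β * X₁.card := add_le_add hNX₀ hNX₁
      _ = β * ((X₀ ∪ X₁).card : ℝ) := by
          rw [Finset.card_union_of_disjoint dXX]; push_cast; ring
  · -- α bound
    have hsub : closedNbhd H (Y₀ ∪ Y₁) ∩ A₀ ⊆
        (closedNbhd H Y₀ ∩ A₀) ∪ (closedNbhd H Y₁ ∩ (A₀ \ (X₀ ∪ closedNbhd H Y₀))) := by
      intro u hu
      rw [Finset.mem_inter, closedNbhd_union, Finset.mem_union] at hu
      obtain ⟨h1, hA⟩ := hu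
      rcases h1 with h1 | h1
      · exact Finset.mem_union_left _ (Finset.mem_inter.2 ⟨h1, hA⟩)
      by_cases h0 : u ∈ closedNbhd H Y₀
      · exact Finset.mem_union_left _ (Finset.mem_inter.2 ⟨h0, hA⟩)
      refine Finset.mem_union_right _ (Finset.mem_inter.2 ⟨h1, ?_⟩)
      rw [Finset.mem_sdiff, Finset.mem_union]
      refine ⟨hA, ?_⟩
      rintro (hX | h0')
      · rcases (mem_closedNbhd H Y₁ u).1 h1 with h | ⟨y, hy, hadj⟩
        · exact Finset.disjoint_left.1 dX₀Y₁ hX h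
        · exact anti₀₁ u hX y hy hadj.symm
      · exact h0 h0'
    calc ((closedNbhd H (Y₀ ∪ Y₁) ∩ A₀).card : ℝ)
        ≤ (((closedNbhd H Y₀ ∩ A₀) ∪ (closedNbhd H Y₁ ∩ (A₀ \ (X₀ ∪ closedNbhd H Y₀)))).card : ℝ) := by
          exact_mod_cast Finset.card_le_card hsub
      _ ≤ ((closedNbhd H Y₀ ∩ A₀).card : ℝ) + ((closedNbhd H Y₁ ∩ (A₀ \ (X₀ ∪ closedNbhd H Y₀))).card : ℝ) := by
          exact_mod_cast Finset.card_union_le _ _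
      _ ≤ α * Y₀.card + α * Y₁.card := add_le_add hNY₀ hNY₁
      _ = α * ((Y₀ ∪ Y₁).card : ℝ) := by
          rw [Finset.card_union_of_disjoint dYY]; push_cast; ring
end

section
/- Let A₁,…,A_m and B₁,…,B_m be two sequences of finite sets such that A_i ∩ B_j = ∅ if and only if i = j. Then ∑_{i=1}^m 1/binom(a_i + b_i, b_i) ≤ 1, where a_i = |A_i| and b_i = |B_i|. -/
/-!
Induction on the size of the ground set `X = ⋃ (A i ∪ B i)`. If some `A i` is empty, the
system consists of that pair alone. Otherwise, for each `x ∈ X`, removing `x` from every `A i`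
and keeping only the pairs with `x ∉ B i` gives a system on `X \ {x}`, whose weights sum to at
most `1`. Summing these bounds over `x`, each pair `i` contributes exactly `|X|` times its weight
`1 / binom(a + b, b)`, by `a · binom(a + b, b) = (a + b) · binom(a - 1 + b, b)`.
-/

open Finset

noncomputable def pairWeight (a b : ℕ) : ℝ := 1 / ((a + b).choose b : ℝ)

theorem Nat.succ_mul_choose_succ_add (a b : ℕ) :
    (a + 1) * (a + 1 + b).choose b = (a + 1 + b) * (a + b).choose b := by
  have key := Nat.add_one_mul_choose_eq (a + b) a
  rw [Nat.choose_symm_add, show a + b + 1 = a + 1 + b by ring, Nat.choose_symm_add] at key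
  rw [mul_comm, ← key, mul_comm]

theorem succ_mul_pairWeight (a b : ℕ) :
    (a + 1 : ℝ) * pairWeight a b = (a + 1 + b) * pairWeight (a + 1) b := by
  have hpos : ∀ n k : ℕ, k ≤ n → (0 : ℝ) < (n.choose k : ℝ) := fun n k hk => by
    exact_mod_cast Nat.choose_pos hk
  have h₁ := hpos (a + b) b (by omega)
  have h₂ := hpos (a + 1 + b) b (by omega)
  unfold pairWeight
  rw [mul_one_div, mul_one_div, div_eq_div_iff h₁.ne' h₂.ne']
  exact_mod_cast Nat.succ_mul_choose_succ_add a b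

theorem sum_pairWeight_card_erase {α : Type*} [DecidableEq α] {X s t : Finset α}
    (hs : s ⊆ X) (ht : t ⊆ X) (hst : Disjoint s t) (hne : s.Nonempty) :
    ∑ x ∈ X \ t, pairWeight (s.erase x).card t.card = X.card * pairWeight s.card t.card := by
  obtain ⟨a, ha⟩ : ∃ a, s.card = a + 1 := ⟨s.card - 1, by have := hne.card_pos; omega⟩
  have hin : (X \ t).filter (· ∈ s) = s := by
    ext x; simp only [mem_filter, mem_sdiff]
    exact ⟨fun h => h.2, fun h => ⟨⟨hs h, disjoint_left.mp hst h⟩, h⟩⟩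
  have hout : (X \ t).filter (· ∉ s) = X \ (s ∪ t) := by
    ext x; simp only [mem_filter, mem_sdiff, mem_union]; tauto
  have hcard : (X \ (s ∪ t)).card + (s.card + t.card) = X.card := by
    rw [← card_union_of_disjoint hst, card_sdiff_add_card_eq_card (union_subset hs ht)]
  have herase : ∑ x ∈ s, pairWeight (s.erase x).card t.card = s.card * pairWeight a t.card := by
    rw [sum_congr rfl fun x hx => by rw [card_erase_of_mem hx, ha, Nat.add_sub_cancel],
      sum_const, nsmul_eq_mul]
  have hkeep : ∑ x ∈ X \ (s ∪ t), pairWeight (s.erase x).card t.card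
      = (X \ (s ∪ t)).card * pairWeight s.card t.card := by
    rw [sum_congr rfl fun x hx => by
      rw [erase_eq_of_notMem fun hxs => (mem_sdiff.mp hx).2 (mem_union_left t hxs)],
      sum_const, nsmul_eq_mul]
  rw [← sum_filter_add_sum_filter_not _ (· ∈ s), hin, hout, herase, hkeep, ← hcard, ha]
  push_cast
  linear_combination succ_mul_pairWeight a t.card

def IsSetPairSystem {ι α : Type*} (s : Finset ι) (A B : ι → Finset α) : Prop :=
  ∀ i ∈ s, ∀ j ∈ s, Disjoint (A i) (B j) ↔ i = j

namespace IsSetPairSystem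

variable {ι α : Type*} {s : Finset ι} {A B : ι → Finset α}

theorem eq_singleton_of_eq_empty (h : IsSetPairSystem s A B) {i : ι} (hi : i ∈ s)
    (hA : A i = ∅) : s = {i} :=
  eq_singleton_iff_unique_mem.mpr
    ⟨hi, fun j hj => ((h i hi j hj).mp (by simp [hA])).symm⟩

theorem erase [DecidableEq α] (h : IsSetPairSystem s A B) (x : α) :
    IsSetPairSystem (s.filter (x ∉ B ·)) (fun i => (A i).erase x) B := by
  intro i hi j hj
  rw [disjoint_erase_comm, erase_eq_of_notMem (mem_filter.mp hj).2]
  exact h i (mem_filter.mp hi).1 j (mem_filter.mp hj).1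

theorem sum_pairWeight_le_one [DecidableEq α] (h : IsSetPairSystem s A B) :
    ∑ i ∈ s, pairWeight (A i).card (B i).card ≤ 1 := by
  induction hN : (s.biUnion fun i => A i ∪ B i).card using Nat.strong_induction_on
    generalizing s A with
  | _ N ih =>
  set X := s.biUnion fun i => A i ∪ B i
  rcases s.eq_empty_or_nonempty with rfl | ⟨i₀, hi₀⟩
  · simp
  by_cases hempty : ∃ i ∈ s, A i = ∅
  · obtain ⟨i, hi, hA⟩ := hempty
    simp [h.eq_singleton_of_eq_empty hi hA, pairWeight, hA]
  push Not at hempty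
  have hAX : ∀ i ∈ s, A i ⊆ X := fun i hi =>
    subset_union_left.trans (subset_biUnion_of_mem (fun i => A i ∪ B i) hi)
  have hBX : ∀ i ∈ s, B i ⊆ X := fun i hi =>
    subset_union_right.trans (subset_biUnion_of_mem (fun i => A i ∪ B i) hi)
  have hXpos : (0 : ℝ) < X.card := by
    obtain ⟨x, hx⟩ := hempty i₀ hi₀
    exact_mod_cast card_pos.mpr ⟨x, hAX i₀ hi₀ hx⟩
  have hlink : ∀ x ∈ X,
      ∑ i ∈ s.filter (x ∉ B ·), pairWeight ((A i).erase x).card (B i).card ≤ 1 := by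
    intro x hx
    refine ih _ ((card_le_card ?_).trans_lt (hN ▸ card_erase_lt_of_mem hx)) (h.erase x) rfl
    intro y
    simp only [mem_biUnion, mem_filter, mem_union, mem_erase]
    rintro ⟨i, ⟨hi, hxB⟩, ⟨hyx, hyA⟩ | hyB⟩
    · exact ⟨hyx, hAX i hi hyA⟩
    · exact ⟨ne_of_mem_of_not_mem hyB hxB, hBX i hi hyB⟩
  have hdouble : X.card * ∑ i ∈ s, pairWeight (A i).card (B i).card ≤ X.card := calc
    X.card * ∑ i ∈ s, pairWeight (A i).card (B i).card
      = ∑ i ∈ s, ∑ x ∈ X \ B i, pairWeight ((A i).erase x).card (B i).card := by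
        rw [mul_sum]
        exact sum_congr rfl fun i hi => (sum_pairWeight_card_erase (hAX i hi) (hBX i hi)
          ((h i hi i hi).mpr rfl) (hempty i hi)).symm
    _ = ∑ x ∈ X, ∑ i ∈ s.filter (x ∉ B ·), pairWeight ((A i).erase x).card (B i).card :=
        sum_comm' fun i x => by simp only [mem_sdiff, mem_filter]; tauto
    _ ≤ ∑ x ∈ X, 1 := sum_le_sum hlink
    _ = X.card := by simp
  exact le_of_mul_le_mul_left (by simpa using hdouble) hXpos

end IsSetPairSystem

/-- A generalization of Bollobás's Two Families Theorem: if `A i ∩ B j = ∅` iff `i = j`,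
then `∑ i, 1 / binom(|A i| + |B i|, |B i|) ≤ 1`. -/
theorem bollobas_two_families {α : Type} (m : ℕ) (A B : Fin m → Finset α)
    (h : ∀ i j, Disjoint (A i) (B j) ↔ i = j) :
    ∑ i : Fin m, (1 : ℝ) / (((A i).card + (B i).card).choose ((B i).card) : ℝ) ≤ 1 := by
  classical
  exact IsSetPairSystem.sum_pairWeight_le_one fun i _ j _ => h i j
end

section
/- Let G be a finite graph, let d and q be positive integers, and let A, B be vertex subsets of G. For all a ∈ A and b ∈ B, let 𝓕_{a,b} be the family of vertex sets of paths in G of length at most d with one endpoint a and the other endpoint b, and let 𝓕'_{a,b} be a subfamily of 𝓕_{a,b} that q-represents 𝓕_{a,b}. Let G' be the subgraph of G induced by A ∪ B together with the union of all sets in all the families 𝓕'_{a,b}. Then for every vertex set S with |S| ≤ q and all A' ⊆ A and B' ⊆ B: if S d-separates A' and B' in G', then S d-separates A' and B' in G. -/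
open SimpleGraph

/-- `S` `d`-separates `A` and `B` in `G` if every path in `G` of length at most `d`
with one endpoint in `A` and the other in `B` contains a vertex of `S`. -/
def DSeparates {V : Type} (G : SimpleGraph V) (d : ℕ) (S A B : Set V) : Prop :=
  ∀ a ∈ A, ∀ b ∈ B, ∀ p : G.Walk a b, p.IsPath → p.length ≤ d → ∃ s ∈ S, s ∈ p.support

/-- The family of vertex sets of paths in `G` of length at most `d` with endpoints
`a` and `b`. -/
def pathVertexSets {V : Type} [DecidableEq V] (G : SimpleGraph V) (d : ℕ) (a b : V) :
    Set (Finset V) :=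
  {X | ∃ p : G.Walk a b, p.IsPath ∧ p.length ≤ d ∧ X = p.support.toFinset}

/-- The subgraph of `G` induced by the vertex set `W` (kept on the same vertex type:
edges are the edges of `G` with both endpoints in `W`). -/
def restrictTo {V : Type} (G : SimpleGraph V) (W : Set V) : SimpleGraph V where
  Adj u v := u ∈ W ∧ v ∈ W ∧ G.Adj u v
  symm := ⟨by rintro u v ⟨hu, hv, h⟩; exact ⟨hv, hu, h.symm⟩⟩
  loopless := ⟨by rintro v ⟨_, _, h⟩; exact h.ne rfl⟩

/-!
Suppose `S` misses a short `a`–`b` path of `G` with `a ∈ A'`, `b ∈ B'`. Since `|S| ≤ q`, the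
representative family `𝓕'_{a,b}` contains the vertex set of a short `a`–`b` path that also
misses `S`. All vertices of that path lie in `G'`, so it is a path of `G'` avoiding `S`,
contradicting the separation in `G'`.
-/

section restrictTo

variable {V : Type} {G : SimpleGraph V} {W : Set V}

lemma SimpleGraph.Walk.edges_subset_edgeSet_restrictTo {a b : V} (p : G.Walk a b)
    (hW : ∀ v ∈ p.support, v ∈ W) : ∀ e ∈ p.edges, e ∈ (restrictTo G W).edgeSet := by
  intro e he
  induction e using Sym2.ind with
  | _ u v =>
    exact ⟨hW u (p.fst_mem_support_of_mem_edges he), hW v (p.snd_mem_support_of_mem_edges he),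
      p.edges_subset_edgeSet he⟩

lemma DSeparates.exists_mem_support_of_support_subset {d : ℕ} {S A B : Set V}
    (h : DSeparates (restrictTo G W) d S A B) {a b : V} (ha : a ∈ A) (hb : b ∈ B)
    (p : G.Walk a b) (hp : p.IsPath) (hlen : p.length ≤ d) (hW : ∀ v ∈ p.support, v ∈ W) :
    ∃ s ∈ S, s ∈ p.support := by
  have hedges := p.edges_subset_edgeSet_restrictTo hW
  simpa only [Walk.support_transfer] using
    h a ha b hb (p.transfer _ hedges) (hp.transfer hedges) (by rwa [Walk.length_transfer])

end restrictTo

theorem separation_localization_general {V : Type} [DecidableEq V]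
    (G : SimpleGraph V) (d q : ℕ) (A B : Set V)
    (F' : ∀ a b : V, Set (Finset V))
    (hsub : ∀ a ∈ A, ∀ b ∈ B, F' a b ⊆ pathVertexSets G d a b)
    (hrep : ∀ a ∈ A, ∀ b ∈ B, ∀ S : Finset V, S.card ≤ q →
        (∃ X ∈ pathVertexSets G d a b, Disjoint X S) → ∃ X ∈ F' a b, Disjoint X S)
    (S : Finset V) (hS : S.card ≤ q)
    (A' B' : Set V) (hA' : A' ⊆ A) (hB' : B' ⊆ B)
    (hsep : DSeparates
        (restrictTo G (A ∪ B ∪ ⋃ a ∈ A, ⋃ b ∈ B, ⋃ X ∈ F' a b, (X : Set V)))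
        d ↑S A' B') :
    DSeparates G d ↑S A' B' := by
  intro a ha b hb p hp hlen
  by_contra! hmiss
  have hdisj : Disjoint p.support.toFinset S :=
    Finset.disjoint_left.mpr fun v hv hvS => hmiss v hvS (List.mem_toFinset.mp hv)
  obtain ⟨X, hXF, hXS⟩ := hrep a (hA' ha) b (hB' hb) S hS
    ⟨_, ⟨p, hp, hlen, rfl⟩, hdisj⟩
  obtain ⟨p', hp', hlen', rfl⟩ := hsub a (hA' ha) b (hB' hb) hXF
  have hW : ∀ v ∈ p'.support, v ∈ A ∪ B ∪ ⋃ a ∈ A, ⋃ b ∈ B, ⋃ X ∈ F' a b, (X : Set V) :=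
    fun v hv => Or.inr <| Set.mem_biUnion (hA' ha) <| Set.mem_biUnion (hB' hb) <|
      Set.mem_biUnion hXF (List.mem_toFinset.mpr hv)
  obtain ⟨s, hsS, hs⟩ := hsep.exists_mem_support_of_support_subset ha hb p' hp' hlen' hW
  exact Finset.disjoint_left.mp hXS (List.mem_toFinset.mpr hs) hsS

theorem separation_localization {V : Type} [Fintype V] [DecidableEq V]
    (G : SimpleGraph V) (d q : ℕ) (hd : 0 < d) (hq : 0 < q) (A B : Set V)
    (F' : ∀ a b : V, Set (Finset V))
    (hsub : ∀ a ∈ A, ∀ b ∈ B, F' a b ⊆ pathVertexSets G d a b)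
    (hrep : ∀ a ∈ A, ∀ b ∈ B, ∀ S : Finset V, S.card ≤ q →
        (∃ X ∈ pathVertexSets G d a b, Disjoint X S) → ∃ X ∈ F' a b, Disjoint X S)
    (S : Finset V) (hS : S.card ≤ q)
    (A' B' : Set V) (hA' : A' ⊆ A) (hB' : B' ⊆ B)
    (hsep : DSeparates
        (restrictTo G (A ∪ B ∪ ⋃ a ∈ A, ⋃ b ∈ B, ⋃ X ∈ F' a b, (X : Set V)))
        d ↑S A' B') :
    DSeparates G d ↑S A' B' :=
  separation_localization_general G d q A B F' hsub hrep S hS A' B' hA' hB' hsep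
end

section
/- Let G be a finite graph, d a positive integer, and let S, A₀, B' be vertex subsets of G such that every path in G of length at most d with one endpoint in A₀ and the other endpoint in B' contains a vertex of S. If all vertices of B' have the same distance-d profile on S in G, then all vertices of B' have the same distance-d profile on A₀ in G; that is, for all a ∈ A₀ and b₁, b₂ ∈ B', if dist_G(a, b₁) ≤ d then dist_G(a, b₂) = dist_G(a, b₁). -/
open SimpleGraph

/-- The distance-`d` profile of a vertex `u` on a vertex `s`: the distance from `u`
to `s` in `G` if it is at most `d`, and `∞` otherwise (graph distances are measured
in `ℕ∞`, with `⊤` for unreachable pairs). -/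
noncomputable def distProfile {V : Type} (G : SimpleGraph V) (d : ℕ) (u s : V) : ℕ∞ :=
  if G.edist u s ≤ (d : ℕ∞) then G.edist u s else ⊤

theorem same_profile_on_separator {V : Type} (G : SimpleGraph V) (d : ℕ) (hd : 0 < d)
    (S A₀ B' : Set V)
    (hsep : ∀ a ∈ A₀, ∀ b ∈ B', ∀ p : G.Walk a b,
        p.IsPath → p.length ≤ d → ∃ s ∈ S, s ∈ p.support)
    (hprof : ∀ b₁ ∈ B', ∀ b₂ ∈ B', ∀ s ∈ S, distProfile G d b₁ s = distProfile G d b₂ s) :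
    ∀ a ∈ A₀, ∀ b₁ ∈ B', ∀ b₂ ∈ B',
      G.edist a b₁ ≤ (d : ℕ∞) → G.edist a b₂ = G.edist a b₁ := by
  classical
  have key : ∀ a ∈ A₀, ∀ b₁ ∈ B', ∀ b₂ ∈ B',
      G.edist a b₁ ≤ (d : ℕ∞) → G.edist a b₂ ≤ G.edist a b₁ := by
    intro a ha b₁ hb₁ b₂ hb₂ hle
    have hne : G.edist a b₁ ≠ ⊤ := fun h => by simp [h] at hle
    obtain ⟨p, hp⟩ := G.exists_walk_of_edist_ne_top hne
    -- pass to a path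
    set q := p.bypass with hq
    have hqpath : q.IsPath := p.bypass_isPath
    have hqlen : q.length ≤ p.length := p.length_bypass_le
    have hqd : q.length ≤ d := by
      have : (q.length : ℕ∞) ≤ (d : ℕ∞) := le_trans (by exact_mod_cast hqlen) (hp ▸ hle)
      exact_mod_cast this
    obtain ⟨s, hs, hsmem⟩ := hsep a ha b₁ hb₁ q hqpath hqd
    -- split q at s
    have hsplit : (q.takeUntil s hsmem).length + (q.dropUntil s hsmem).length = q.length := by
      have := congr_arg Walk.length (q.take_spec hsmem)
      rwa [Walk.length_append] at this
    have h1 : G.edist a s ≤ ((q.takeUntil s hsmem).length : ℕ∞) := G.edist_le _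
    have h2 : G.edist s b₁ ≤ ((q.dropUntil s hsmem).length : ℕ∞) := G.edist_le _
    have hsum : G.edist a s + G.edist s b₁ ≤ G.edist a b₁ := by
      calc G.edist a s + G.edist s b₁
          ≤ ((q.takeUntil s hsmem).length : ℕ∞) + ((q.dropUntil s hsmem).length : ℕ∞) :=
            add_le_add h1 h2
        _ = (q.length : ℕ∞) := by exact_mod_cast hsplit
        _ ≤ (p.length : ℕ∞) := by exact_mod_cast hqlen
        _ = G.edist a b₁ := hp
    have hsb₁d : G.edist b₁ s ≤ (d : ℕ∞) := by
      rw [G.edist_comm]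
      exact le_trans h2 (by exact_mod_cast le_trans (le_trans (Nat.le_add_left _ _) hsplit.le) hqd)
    -- profile equality
    have hprofeq := hprof b₁ hb₁ b₂ hb₂ s hs
    unfold distProfile at hprofeq
    rw [if_pos hsb₁d] at hprofeq
    have hsb₂ : G.edist b₂ s = G.edist b₁ s := by
      by_cases h : G.edist b₂ s ≤ (d : ℕ∞)
      · rw [if_pos h] at hprofeq; exact hprofeq.symm
      · rw [if_neg h] at hprofeq
        exact absurd (hprofeq ▸ hsb₁d) (by simp)
    calc G.edist a b₂ ≤ G.edist a s + G.edist s b₂ := G.edist_triangle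
      _ = G.edist a s + G.edist s b₁ := by rw [G.edist_comm (u := s) (v := b₂), hsb₂, G.edist_comm (u := b₁)]
      _ ≤ G.edist a b₁ := hsum
  intro a ha b₁ hb₁ b₂ hb₂ hle
  have h1 := key a ha b₁ hb₁ b₂ hb₂ hle
  have h2 := key a ha b₂ hb₂ b₁ hb₁ (le_trans h1 hle)
  exact le_antisymm h1 h2
end

section
/- Let G be a finite graph on n ≥ 2 vertices that admits a connection model of depth d using a label set of size s. Then there exist disjoint vertex subsets A and B of G such that min(|A|, |B|) ≥ n/(3s·2^{d−2}) and A is either complete or anticomplete to B. -/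
open SimpleGraph

/-- Longest common prefix of two lists. -/
def lcp {I : Type} [DecidableEq I] : List I → List I → List I
  | a :: as, b :: bs => if a = b then a :: lcp as bs else []
  | _, _ => []

/-- `G` admits a connection model of depth at most `d` with label set `Fin s`:
a rooted tree whose leaves are exactly the vertices of `G` is encoded by assigning to
each vertex `v` (= leaf) the sequence `branch v` of tree edges on the root-to-leaf path
(so no leaf lies on the path of another, and each root-to-leaf path has at most `d`
tree vertices), every vertex gets a label, every internal node `x` (encoded by the
root-to-`x` path) carries a symmetric relation `Z x` on labels, and two distinct
vertices `u, v` of `G` are adjacent iff the pair of their labels lies in `Z x` for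
`x` the lowest common ancestor of `u` and `v` (= the longest common prefix of their
branches). -/
def HasConnectionModel {V : Type} (G : SimpleGraph V) (d s : ℕ) : Prop :=
  ∃ (lab : V → Fin s) (branch : V → List ℕ) (Z : List ℕ → Fin s → Fin s → Prop),
    (∀ u v : V, u ≠ v → ¬ (branch u <+: branch v)) ∧
    (∀ v : V, (branch v).length + 1 ≤ d) ∧
    (∀ x a b, Z x a b → Z x b a) ∧
    (∀ u v : V, u ≠ v → (G.Adj u v ↔ Z (lcp (branch u) (branch v)) (lab u) (lab v)))

lemma lcp_take : ∀ (k : ℕ) (a b : List ℕ), k < a.length → k < b.length →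
    a.take k = b.take k → a.take (k+1) ≠ b.take (k+1) → lcp a b = a.take k := by
  intro k
  induction k with
  | zero =>
    intro a b ha hb _ hne
    match a, b with
    | x :: a', y :: b' =>
      have hxy : x ≠ y := by
        intro h; apply hne; simp [h]
      simp [lcp, hxy]
  | succ k ih =>
    intro a b ha hb htk hne
    match a, b with
    | x :: a', y :: b' =>
      simp only [List.take_succ_cons, List.cons.injEq] at htk
      obtain ⟨hxy, htk'⟩ := htk
      subst hxy
      have hne' : a'.take (k+1) ≠ b'.take (k+1) := by
        intro h; apply hne; simp [h]
      have ha' : k < a'.length := by simpa using ha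
      have hb' : k < b'.length := by simpa using hb
      simp [lcp, ih a' b' ha' hb' htk' hne']

/-- Pigeonhole over labels. -/
lemma pigeon {V : Type} [DecidableEq V] {s : ℕ} (hs : 0 < s) (lab : V → Fin s)
    (X : Finset V) : ∃ a : Fin s, X.card ≤ s * (X.filter (fun v => lab v = a)).card := by
  have huniv : (Finset.univ : Finset (Fin s)).Nonempty := ⟨⟨0, hs⟩, Finset.mem_univ _⟩
  obtain ⟨a, -, ha⟩ := Finset.exists_max_image Finset.univ
    (fun a => (X.filter (fun v => lab v = a)).card) huniv
  refine ⟨a, ?_⟩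
  calc X.card = ∑ b : Fin s, (X.filter (fun v => lab v = b)).card :=
        Finset.card_eq_sum_card_fiberwise (fun v _ => Finset.mem_univ (lab v))
    _ ≤ ∑ _b : Fin s, (X.filter (fun v => lab v = a)).card :=
        Finset.sum_le_sum (fun b _ => ha b (Finset.mem_univ _))
    _ = s * (X.filter (fun v => lab v = a)).card := by
        simp [Finset.sum_const, mul_comm]

lemma greedy_aux {V : Type} [DecidableEq V] (S : Finset V) (f : V → List ℕ) (n : ℕ)
    (hsmall : ∀ c, 3 * (S.filter (fun v => f v = c)).card < n) :
    ∀ L : List (List ℕ), 3 * (S.filter (fun v => f v ∈ L)).card < n ∨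
      ∃ C : List (List ℕ), n ≤ 3 * (S.filter (fun v => f v ∈ C)).card ∧
        3 * (S.filter (fun v => f v ∈ C)).card ≤ 2 * n := by
  intro L
  induction L with
  | nil =>
    left
    have hn := hsmall []
    simpa using lt_of_le_of_lt (by simp) hn
  | cons c L ih =>
    rcases ih with h | h
    · by_cases hcl : n ≤ 3 * (S.filter (fun v => f v ∈ c :: L)).card
      · right
        refine ⟨c :: L, hcl, ?_⟩
        have hsub : S.filter (fun v => f v ∈ c :: L) ⊆
            S.filter (fun v => f v ∈ L) ∪ S.filter (fun v => f v = c) := by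
          intro v hv
          simp only [Finset.mem_filter, List.mem_cons] at hv
          rcases hv with ⟨hvS, h1 | h2⟩
          · exact Finset.mem_union_right _ (Finset.mem_filter.mpr ⟨hvS, h1⟩)
          · exact Finset.mem_union_left _ (Finset.mem_filter.mpr ⟨hvS, h2⟩)
        have hcard := (Finset.card_le_card hsub).trans (Finset.card_union_le _ _)
        have hc := hsmall c
        omega
      · left; omega
    · right; exact h

/-- Main induction: any set of at least two vertices whose branches share a common
prefix of length `k` and have depth at most `d` below it contains a large
`Z`-homogeneous pair of sets. -/
lemma key {V : Type} [DecidableEq V] {s : ℕ} (lab : V → Fin s) (branch : V → List ℕ)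
    (Z : List ℕ → Fin s → Fin s → Prop) :
    ∀ (d k : ℕ) (S : Finset V), 2 ≤ S.card →
    (∀ u ∈ S, ∀ v ∈ S, u ≠ v → ¬ (branch u <+: branch v)) →
    (∀ v ∈ S, (branch v).length + 1 ≤ k + d) →
    (∀ u ∈ S, ∀ v ∈ S, (branch u).take k = (branch v).take k) →
    ∃ A B : Finset V, Disjoint A B ∧
      S.card ≤ 3 * s * 2 ^ (d - 2) * A.card ∧
      S.card ≤ 3 * s * 2 ^ (d - 2) * B.card ∧
      ((∀ a ∈ A, ∀ b ∈ B, Z (lcp (branch a) (branch b)) (lab a) (lab b)) ∨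
       (∀ a ∈ A, ∀ b ∈ B, ¬ Z (lcp (branch a) (branch b)) (lab a) (lab b))) := by
  intro d
  induction d with
  | zero =>
    intro k S hcard hanti hdep htake
    exfalso
    obtain ⟨u, hu, v, hv, huv⟩ := Finset.one_lt_card.mp hcard
    have h1 := hdep u hu
    have h1v := hdep v hv
    have h2 : ¬ (branch u <+: branch v) := hanti u hu v hv huv
    apply h2
    have hu' : (branch u).take k = branch u :=
      List.take_of_length_le (by omega)
    have hv' : (branch v).take k = branch v :=
      List.take_of_length_le (by omega)
    rw [← hu', htake u hu v hv, hv']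
  | succ m ih =>
    intro k S hcard hanti hdep htake
    -- every branch in S is strictly longer than k
    have hlen : ∀ v ∈ S, k < (branch v).length := by
      intro v hv
      by_contra hle
      push_neg at hle
      obtain ⟨u1, hu1, u2, hu2, hne12⟩ := Finset.one_lt_card.mp hcard
      have : ∃ u ∈ S, u ≠ v := by
        by_cases h : u1 = v
        · exact ⟨u2, hu2, by rw [← h]; exact hne12.symm⟩
        · exact ⟨u1, hu1, h⟩
      obtain ⟨u, hu, huv⟩ := this
      apply hanti v hv u hu huv.symm
      have hv' : (branch v).take k = branch v := List.take_of_length_le hle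
      rw [← hv', htake v hv u hu]
      exact List.take_prefix _ _
    set f : V → List ℕ := fun v => (branch v).take (k+1) with hf
    by_cases hbig : ∃ c, S.card < 2 * (S.filter (fun v => f v = c)).card
    · -- a huge part: recurse into it
      obtain ⟨c, hc⟩ := hbig
      set P := S.filter (fun v => f v = c) with hP
      have hPsub : P ⊆ S := Finset.filter_subset _ _
      have hPcard : 2 ≤ P.card := by omega
      -- any two distinct elements of P force depth ≥ 3, i.e. m ≥ 2
      obtain ⟨u, hu, v, hv, huv⟩ := Finset.one_lt_card.mp hPcard
      have huS := hPsub hu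
      have hvS := hPsub hv
      have hulen : k + 2 ≤ (branch u).length := by
        by_contra hle
        push_neg at hle
        apply hanti u huS v hvS huv
        have hu' : (branch u).take (k+1) = branch u := List.take_of_length_le (by omega)
        have hfu : f u = c := (Finset.mem_filter.mp hu).2
        have hfv : f v = c := (Finset.mem_filter.mp hv).2
        have : (branch u).take (k+1) = (branch v).take (k+1) := by
          simp only [hf] at hfu hfv; rw [hfu, hfv]
        rw [← hu', this]
        exact List.take_prefix _ _
      have hm2 : 2 ≤ m := by have := hdep u huS; omega
      -- apply induction hypothesis to P with prefix length k+1
      obtain ⟨A, B, hAB, hA, hB, huni⟩ := ih (k+1) P hPcard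
        (fun u hu v hv h => hanti u (hPsub hu) v (hPsub hv) h)
        (fun v hv => by have := hdep v (hPsub hv); omega)
        (fun u hu v hv => by
          have hfu : f u = c := (Finset.mem_filter.mp hu).2
          have hfv : f v = c := (Finset.mem_filter.mp hv).2
          simp only [hf] at hfu hfv; rw [hfu, hfv])
      have hpow2 : 2 * 2 ^ (m - 2) = 2 ^ (m + 1 - 2) := by
        rw [← pow_succ']
        congr 1
        omega
      refine ⟨A, B, hAB, ?_, ?_, huni⟩
      · calc S.card ≤ 2 * P.card := by omega
          _ ≤ 2 * (3 * s * 2 ^ (m - 2) * A.card) := by omega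
          _ = 3 * s * (2 * 2 ^ (m - 2)) * A.card := by ring
          _ = 3 * s * 2 ^ (m + 1 - 2) * A.card := by rw [hpow2]
      · calc S.card ≤ 2 * P.card := by omega
          _ ≤ 2 * (3 * s * 2 ^ (m - 2) * B.card) := by omega
          _ = 3 * s * (2 * 2 ^ (m - 2)) * B.card := by ring
          _ = 3 * s * 2 ^ (m + 1 - 2) * B.card := by rw [hpow2]
    · -- all parts are at most half: find a balanced, part-closed split
      push_neg at hbig
      have hX : ∃ C : List (List ℕ), S.card ≤ 3 * (S.filter (fun v => f v ∈ C)).card ∧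
          3 * (S.filter (fun v => f v ∈ C)).card ≤ 2 * S.card := by
        by_cases hmed : ∃ c, S.card ≤ 3 * (S.filter (fun v => f v = c)).card
        · obtain ⟨c, hc⟩ := hmed
          refine ⟨[c], ?_, ?_⟩ <;>
          · have : S.filter (fun v => f v ∈ [c]) = S.filter (fun v => f v = c) := by
              apply Finset.filter_congr
              intro v _
              simp
            rw [this]
            have := hbig c
            omega
        · push_neg at hmed
          have hsmall : ∀ c, 3 * (S.filter (fun v => f v = c)).card < S.card := by
            intro c; have := hmed c; omega
          have := greedy_aux S f S.card hsmall ((S.image f).toList)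
          rcases this with h | h
          · exfalso
            have hall : S.filter (fun v => f v ∈ (S.image f).toList) = S := by
              apply Finset.filter_true_of_mem
              intro v hv
              rw [Finset.mem_toList]
              exact Finset.mem_image_of_mem f hv
            rw [hall] at h
            omega
          · exact h
      obtain ⟨C, hX1, hX2⟩ := hX
      set X := S.filter (fun v => f v ∈ C) with hXdef
      set Y := S \ X with hYdef
      have hXsub : X ⊆ S := Finset.filter_subset _ _
      have hYcard : S.card ≤ 3 * Y.card := by
        have hy : Y.card = S.card - X.card := Finset.card_sdiff_of_subset hXsub
        have hxle : X.card ≤ S.card := Finset.card_le_card hXsub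
        omega
      -- s is positive
      obtain ⟨u0, hu0⟩ : S.Nonempty := Finset.card_pos.mp (by omega)
      have hs : 0 < s := (lab u0).pos
      obtain ⟨la, hla⟩ := pigeon hs lab X
      obtain ⟨lb, hlb⟩ := pigeon hs lab Y
      set A := X.filter (fun v => lab v = la) with hAdef
      set B := Y.filter (fun v => lab v = lb) with hBdef
      have hAX : A ⊆ X := Finset.filter_subset _ _
      have hBY : B ⊆ Y := Finset.filter_subset _ _
      have hdisj : Disjoint A B :=
        Finset.disjoint_of_subset_left hAX
          (Finset.disjoint_of_subset_right hBY (Finset.disjoint_sdiff))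
      have hpow : 1 ≤ 2 ^ (m + 1 - 2) := Nat.one_le_two_pow
      have hAbound : S.card ≤ 3 * s * 2 ^ (m + 1 - 2) * A.card := by
        have : S.card ≤ 3 * (s * A.card) := by omega
        calc S.card ≤ 3 * (s * A.card) := this
          _ = 3 * s * 1 * A.card := by ring
          _ ≤ 3 * s * 2 ^ (m + 1 - 2) * A.card := by
              apply Nat.mul_le_mul_right
              apply Nat.mul_le_mul_left
              exact hpow
      have hBbound : S.card ≤ 3 * s * 2 ^ (m + 1 - 2) * B.card := by
        have : S.card ≤ 3 * (s * B.card) := by omega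
        calc S.card ≤ 3 * (s * B.card) := this
          _ = 3 * s * 1 * B.card := by ring
          _ ≤ 3 * s * 2 ^ (m + 1 - 2) * B.card := by
              apply Nat.mul_le_mul_right
              apply Nat.mul_le_mul_left
              exact hpow
      -- the lcp of any cross pair is the common prefix of length k
      set p := (branch u0).take k with hpdef
      have hcross : ∀ a ∈ A, ∀ b ∈ B,
          lcp (branch a) (branch b) = p ∧ lab a = la ∧ lab b = lb := by
        intro a ha b hb
        have haX := hAX ha
        have hbY := hBY hb
        have haS : a ∈ S := hXsub haX
        obtain ⟨hbS, hbnX⟩ := Finset.mem_sdiff.mp hbY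
        have hfa : f a ∈ C := (Finset.mem_filter.mp haX).2
        have hfb : f b ∉ C := by
          intro h
          exact hbnX (Finset.mem_filter.mpr ⟨hbS, h⟩)
        have hne : (branch a).take (k+1) ≠ (branch b).take (k+1) := by
          intro h
          apply hfb
          simp only [hf, ← h]
          exact hfa
        have hlcp : lcp (branch a) (branch b) = (branch a).take k :=
          lcp_take k _ _ (hlen a haS) (hlen b hbS) (htake a haS b hbS) hne
        refine ⟨by rw [hlcp, hpdef]; exact htake a haS u0 hu0, ?_, ?_⟩
        · exact (Finset.mem_filter.mp ha).2
        · exact (Finset.mem_filter.mp hb).2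
      refine ⟨A, B, hdisj, hAbound, hBbound, ?_⟩
      rcases em (Z p la lb) with hz | hz
      · left
        intro a ha b hb
        obtain ⟨h1, h2, h3⟩ := hcross a ha b hb
        rw [h1, h2, h3]
        exact hz
      · right
        intro a ha b hb
        obtain ⟨h1, h2, h3⟩ := hcross a ha b hb
        rw [h1, h2, h3]
        exact hz

theorem connection_model_strong_EH {V : Type} [Fintype V] [DecidableEq V]
    (G : SimpleGraph V) (hn : 2 ≤ Fintype.card V)
    (d s : ℕ) (hmodel : HasConnectionModel G d s) :
    ∃ A B : Finset V, Disjoint A B ∧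
      (Fintype.card V : ℝ) / (3 * (s : ℝ) * 2 ^ (d - 2)) ≤
        min (A.card : ℝ) (B.card : ℝ) ∧
      ((∀ a ∈ A, ∀ b ∈ B, G.Adj a b) ∨ (∀ a ∈ A, ∀ b ∈ B, ¬ G.Adj a b)) := by
  obtain ⟨lab, branch, Z, hanti, hdep, _hsym, hadj⟩ := hmodel
  have hcard : 2 ≤ (Finset.univ : Finset V).card := by
    rwa [Finset.card_univ]
  obtain ⟨A, B, hAB, hA, hB, huni⟩ := key lab branch Z d 0 Finset.univ hcard
    (fun u _ v _ h => hanti u v h)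
    (fun v _ => by simpa using hdep v)
    (fun u _ v _ => by simp)
  have hne : ∀ a ∈ A, ∀ b ∈ B, a ≠ b := by
    intro a ha b hb h
    exact Finset.disjoint_left.mp hAB ha (h ▸ hb)
  refine ⟨A, B, hAB, ?_, ?_⟩
  · -- the cardinality bound, in the reals
    rw [Finset.card_univ] at hA hB
    have hs : 0 < s := by
      have : Nonempty V := Fintype.card_pos_iff.mp (by omega)
      exact (lab this.some).pos
    have hD : (0 : ℝ) < 3 * (s : ℝ) * 2 ^ (d - 2) := by
      positivity
    rw [le_min_iff]
    constructor
    · rw [div_le_iff₀ hD]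
      calc (Fintype.card V : ℝ) ≤ 3 * (s : ℝ) * 2 ^ (d - 2) * (A.card : ℝ) := by
            exact_mod_cast hA
        _ = (A.card : ℝ) * (3 * (s : ℝ) * 2 ^ (d - 2)) := by ring
    · rw [div_le_iff₀ hD]
      calc (Fintype.card V : ℝ) ≤ 3 * (s : ℝ) * 2 ^ (d - 2) * (B.card : ℝ) := by
            exact_mod_cast hB
        _ = (B.card : ℝ) * (3 * (s : ℝ) * 2 ^ (d - 2)) := by ring
  · rcases huni with h | h
    · left
      intro a ha b hb
      exact (hadj a b (hne a ha b hb)).mpr (h a ha b hb)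
    · right
      intro a ha b hb hadjab
      exact h a ha b hb ((hadj a b (hne a ha b hb)).mp hadjab)
end

section
/- Let 𝒞 be a class of finite graphs that admits low shrubdepth colorings. Then 𝒞 has the strong Erdős–Hajnal property: there exists δ > 0 such that every graph G ∈ 𝒞 with n ≥ 2 vertices contains disjoint vertex subsets A and B, each of size at least δn, such that A is complete or anticomplete to B. -/
/-! In a connection model of depth `d` over `s` labels, let `L` be the class of a most frequent
label `a`, so `|L| ≥ n / s`. If one subtree of the root holds half of `L`, recurse into it, losing
a factor `2 s` per level. Otherwise the subtrees can be grouped into two parts each holding a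
quarter of `L`; two vertices of `L` in different subtrees are adjacent iff `(a, a)` lies in the
relation at the root, so the two parts are complete or anticomplete to each other. For the class,
a largest colour class of a colouring for `p = 1` has at least `n / f` vertices and bounded
shrubdepth. -/

open SimpleGraph

/-- The shrubdepth of `G` is at most `s`: `G` has a connection model of depth at most
`s` over a label set of size `s`. -/
def ShrubdepthLE {V : Type} (G : SimpleGraph V) (s : ℕ) : Prop :=
  HasConnectionModel G s s

/-- A class of finite graphs admits low shrubdepth colorings if for every positive `p`
there are `f` and `s` such that every graph in the class has a vertex coloring with at
most `f` colors in which the union of any (at most) `p` color classes induces a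
subgraph of shrubdepth at most `s`. -/
def AdmitsLowShrubdepthColorings (𝒞 : GraphClass) : Prop :=
  ∀ p : ℕ, 0 < p → ∃ f s : ℕ, ∀ n : ℕ, ∀ G ∈ 𝒞 n,
    ∃ col : Fin n → Fin f, ∀ P : Finset (Fin f), P.card ≤ p →
      ShrubdepthLE (G.induce {v : Fin n | col v ∈ P}) s

open Finset

theorem Fintype.exists_card_le_mul_card_fiber {α β : Type*} [Fintype α] [Fintype β] [DecidableEq β]
    [Nonempty β] (f : α → β) : ∃ y, card α ≤ card β * #{x | f x = y} := by
  have hβ : (card β : ℚ) ≠ 0 := by positivity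
  obtain ⟨y, hy⟩ := exists_le_card_fiber_of_nsmul_le_card f (b := (card α / card β : ℚ))
    (by rw [nsmul_eq_mul, mul_div_cancel₀ _ hβ])
  refine ⟨y, ?_⟩
  rw [div_le_iff₀' (by positivity)] at hy
  exact_mod_cast hy

/-- A minimal-weight subset of weight at least a quarter of the total cannot weigh more than three
quarters, since dropping any of its elements, each weighing less than half, undercuts a quarter. -/
theorem Finset.exists_quarter_split {ι : Type*} [DecidableEq ι] (t : Finset ι) (w : ι → ℕ)
    (hw : ∀ i ∈ t, 2 * w i < ∑ j ∈ t, w j) :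
    ∃ T ⊆ t, ∑ j ∈ t, w j ≤ 4 * ∑ j ∈ T, w j ∧ ∑ j ∈ t, w j ≤ 4 * ∑ j ∈ t \ T, w j := by
  set N := ∑ j ∈ t, w j
  obtain ⟨T, hT, hmin⟩ := exists_min_image {T ∈ t.powerset | N ≤ 4 * ∑ j ∈ T, w j}
    (fun T => ∑ j ∈ T, w j) ⟨t, mem_filter.2 ⟨mem_powerset_self t, by omega⟩⟩
  rw [mem_filter, mem_powerset] at hT
  refine ⟨T, hT.1, hT.2, ?_⟩
  by_contra! hlarge
  have hsplit : ∑ j ∈ t \ T, w j + ∑ j ∈ T, w j = N := sum_sdiff hT.1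
  obtain ⟨i, hi, hwi⟩ := exists_ne_zero_of_sum_ne_zero (s := T) (f := w) (by omega)
  have herase : ∑ j ∈ T.erase i, w j + w i = ∑ j ∈ T, w j := sum_erase_add T w hi
  have := hw i (hT.1 hi)
  have := hmin (T.erase i) (by
    rw [mem_filter, mem_powerset]
    exact ⟨(erase_subset i T).trans hT.1, by omega⟩)
  omega

theorem Finset.exists_quarter_split_fiberwise {α ι : Type*} [DecidableEq ι] (s : Finset α)
    (g : α → ι) (h : ∀ i, 2 * #{x ∈ s | g x = i} < #s) :
    ∃ T U : Finset ι, Disjoint T U ∧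
      #s ≤ 4 * #{x ∈ s | g x ∈ T} ∧ #s ≤ 4 * #{x ∈ s | g x ∈ U} := by
  have hs : ∑ i ∈ s.image g, #{x ∈ s | g x = i} = #s := by
    rw [sum_card_fiberwise_eq_card_filter, filter_true_of_mem fun x hx => mem_image_of_mem g hx]
  obtain ⟨T, -, hT, hU⟩ :=
    exists_quarter_split (s.image g) (fun i => #{x ∈ s | g x = i}) fun i _ => hs ▸ h i
  rw [hs, sum_card_fiberwise_eq_card_filter] at hT hU
  exact ⟨T, s.image g \ T, disjoint_sdiff, hT, hU⟩

namespace SimpleGraph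

variable {V W : Type*} (G : SimpleGraph V) {H : SimpleGraph W}

def IsHomogeneousPair (A B : Finset V) : Prop :=
  Disjoint A B ∧ ((∀ a ∈ A, ∀ b ∈ B, G.Adj a b) ∨ ∀ a ∈ A, ∀ b ∈ B, ¬G.Adj a b)

/-- `G` has a homogeneous pair whose sides each contain at least a `1 / k` fraction of its
vertices. -/
def HasHomogeneousPair [Fintype V] (k : ℕ) : Prop :=
  ∃ A B : Finset V, G.IsHomogeneousPair A B ∧
    Fintype.card V ≤ k * #A ∧ Fintype.card V ≤ k * #B

variable {G}

theorem isHomogeneousPair_singleton {u v : V} (h : u ≠ v) : G.IsHomogeneousPair {u} {v} := by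
  refine ⟨disjoint_singleton.2 h, ?_⟩
  simp only [mem_singleton, forall_eq]
  exact em _

theorem IsHomogeneousPair.map (f : G ↪g H) {A B : Finset V} (h : G.IsHomogeneousPair A B) :
    H.IsHomogeneousPair (A.map f.toEmbedding) (B.map f.toEmbedding) := by
  refine ⟨(disjoint_map _).2 h.1, ?_⟩
  simp only [forall_mem_map, RelEmbedding.coe_toEmbedding, f.map_adj_iff]
  exact h.2

section Fintype

variable [Fintype V]

theorem HasHomogeneousPair.mono {k l : ℕ} (h : G.HasHomogeneousPair k) (hkl : k ≤ l) :
    G.HasHomogeneousPair l :=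
  let ⟨A, B, hAB, hA, hB⟩ := h
  ⟨A, B, hAB, hA.trans (Nat.mul_le_mul_right _ hkl), hB.trans (Nat.mul_le_mul_right _ hkl)⟩

theorem hasHomogeneousPair_of_card_le [Nontrivial V] {k : ℕ} (h : Fintype.card V ≤ k) :
    G.HasHomogeneousPair k := by
  obtain ⟨u, v, huv⟩ := exists_pair_ne V
  exact ⟨{u}, {v}, isHomogeneousPair_singleton huv, by simpa, by simpa⟩

theorem hasHomogeneousPair_of_induce [Nontrivial V] {C : Finset V} {m k : ℕ} (hk : 0 < k)
    (hC : Fintype.card V ≤ m * #C) (h : Nontrivial C → (G.induce C).HasHomogeneousPair k) :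
    G.HasHomogeneousPair (m * k) := by
  by_cases hCnt : Nontrivial C
  · obtain ⟨A, B, hAB, hA, hB⟩ := h hCnt
    have hcard : Fintype.card (C : Set V) = #C := by simp
    refine ⟨_, _, hAB.map (Embedding.induce _), ?_, ?_⟩ <;> rw [card_map, mul_assoc]
    · exact hC.trans (Nat.mul_le_mul_left m (hcard ▸ hA))
    · exact hC.trans (Nat.mul_le_mul_left m (hcard ▸ hB))
  · have hC1 : #C ≤ 1 :=
      card_le_one_iff_subsingleton_coe.2 (not_nontrivial_iff_subsingleton.1 hCnt)
    exact hasHomogeneousPair_of_card_le (hC.trans (Nat.mul_le_mul_left m (hC1.trans hk)))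

end Fintype

theorem HasConnectionModel.exists_decomposition_at_root {V : Type} [Nontrivial V]
    {G : SimpleGraph V} {d s : ℕ} (hG : HasConnectionModel G (d + 1) s) :
    ∃ (lab : V → Fin s) (child : V → ℕ) (Z : Fin s → Fin s → Prop),
      (∀ u v, child u ≠ child v → (G.Adj u v ↔ Z (lab u) (lab v))) ∧
      ∀ i, HasConnectionModel (G.induce {v | child v = i}) d s := by
  obtain ⟨lab, branch, Z, hpre, hlen, hsymm, hadj⟩ := hG
  have hbranch : ∀ v, branch v = (branch v).headI :: (branch v).tail := by
    intro v
    obtain ⟨u, hu⟩ := exists_ne v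
    cases h : branch v with
    | nil => exact absurd (h ▸ List.nil_prefix) (hpre v u hu.symm)
    | cons => rfl
  refine ⟨lab, fun v => (branch v).headI, Z [], fun u v h => ?_, fun i => ?_⟩
  · rw [hadj u v (fun huv => h (huv ▸ rfl)), hbranch u, hbranch v, lcp, if_neg h]
  have hchild : ∀ v : {v | (branch v).headI = i}, branch v = i :: (branch v).tail :=
    fun v => (hbranch v).trans (by rw [show (branch v).headI = i from v.2])
  refine ⟨fun v => lab v, fun v => (branch v).tail, fun x => Z (i :: x), ?_, ?_,
    fun x => hsymm (i :: x), ?_⟩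
  · intro u v huv hprefix
    refine hpre u v (Subtype.coe_ne_coe.2 huv) ?_
    rw [hchild u, hchild v]
    exact List.cons_prefix_cons.2 ⟨rfl, hprefix⟩
  · intro v
    have := hlen v
    rw [hchild v, List.length_cons] at this
    exact Nat.le_of_succ_le_succ this
  · intro u v huv
    rw [comap_adj, Function.Embedding.coe_subtype, hadj u v (Subtype.coe_ne_coe.2 huv),
      hchild u, hchild v]
    simp [lcp]

theorem HasConnectionModel.hasHomogeneousPair {V : Type} [Fintype V] [Nontrivial V]
    {G : SimpleGraph V} {d s : ℕ} (hG : HasConnectionModel G d s) :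
    G.HasHomogeneousPair (4 * (2 * s) ^ d) := by
  induction d generalizing V with
  | zero =>
    obtain ⟨_, _, _, _, hlen, _⟩ := hG
    exact absurd (hlen (Classical.arbitrary V)) (Nat.not_succ_le_zero _)
  | succ d ih =>
    classical
    obtain ⟨lab, child, Z, hZ, hsub⟩ := hG.exists_decomposition_at_root
    have hs : 0 < s := Fin.pos (lab (Classical.arbitrary V))
    have : Nonempty (Fin s) := ⟨lab (Classical.arbitrary V)⟩
    obtain ⟨a, ha⟩ := Fintype.exists_card_le_mul_card_fiber lab
    rw [Fintype.card_fin] at ha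
    set L : Finset V := {v | lab v = a}
    by_cases hbig : ∃ i, #L ≤ 2 * #{v ∈ L | child v = i}
    · obtain ⟨i, hi⟩ := hbig
      have hC : Fintype.card V ≤ 2 * s * #{v | child v = i} := calc
        Fintype.card V ≤ s * #L := ha
        _ ≤ s * (2 * #{v ∈ L | child v = i}) := Nat.mul_le_mul_left s hi
        _ ≤ s * (2 * #{v | child v = i}) := by gcongr; exact subset_univ L
        _ = 2 * s * #{v | child v = i} := by ring
      convert hasHomogeneousPair_of_induce (by positivity) hC fun _ => ih ?_ using 1
      · ring
      · rw [coe_filter_univ]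
        exact hsub i
    · push Not at hbig
      obtain ⟨T, U, hTU, hT, hU⟩ := L.exists_quarter_split_fiberwise child hbig
      have hcross : ∀ x ∈ L, ∀ y ∈ L, child x ≠ child y → (G.Adj x y ↔ Z a a) := by
        intro x hx y hy hxy
        rw [hZ x y hxy, (mem_filter.1 hx).2, (mem_filter.1 hy).2]
      have hhom : G.IsHomogeneousPair {v ∈ L | child v ∈ T} {v ∈ L | child v ∈ U} := by
        have hsep : ∀ x ∈ L, child x ∈ T → child x ∉ U :=
          fun x _ hx => Finset.disjoint_left.1 hTU hx
        refine ⟨disjoint_filter.2 hsep, ?_⟩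
        simp only [mem_filter, and_imp]
        by_cases hZa : Z a a
        · exact Or.inl fun x hx hxT y hy hyU =>
            (hcross x hx y hy fun h => hsep x hx hxT (h ▸ hyU)).2 hZa
        · exact Or.inr fun x hx hxT y hy hyU =>
            mt (hcross x hx y hy fun h => hsep x hx hxT (h ▸ hyU)).1 hZa
      have hscale : ∀ n, #L ≤ 4 * n → Fintype.card V ≤ 4 * (2 * s) ^ (d + 1) * n :=
        fun n hn => calc
          Fintype.card V ≤ s * #L := ha
          _ ≤ (2 * s) ^ (d + 1) * (4 * n) := by
            refine Nat.mul_le_mul ?_ hn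
            exact (Nat.le_mul_of_pos_left s two_pos).trans (Nat.le_self_pow d.succ_ne_zero _)
          _ = 4 * (2 * s) ^ (d + 1) * n := by ring
      exact ⟨_, _, hhom, hscale _ hT, hscale _ hU⟩

end SimpleGraph

theorem low_shrubdepth_colorings_strong_EH
    (𝒞 : GraphClass) (h𝒞 : AdmitsLowShrubdepthColorings 𝒞) :
    ∃ δ : ℝ, 0 < δ ∧ ∀ n : ℕ, ∀ G ∈ 𝒞 n, 2 ≤ n →
      ∃ A B : Finset (Fin n), Disjoint A B ∧
        δ * (n : ℝ) ≤ (A.card : ℝ) ∧ δ * (n : ℝ) ≤ (B.card : ℝ) ∧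
        ((∀ a ∈ A, ∀ b ∈ B, G.Adj a b) ∨ (∀ a ∈ A, ∀ b ∈ B, ¬ G.Adj a b)) := by
  obtain ⟨f, s, hfs⟩ := h𝒞 1 one_pos
  set k := f * (4 * (2 * s) ^ s)
  -- `k` vanishes when `f = 0`, hence the `+ 1`
  refine ⟨((k + 1 : ℕ) : ℝ)⁻¹, by positivity, fun n G hG hn => ?_⟩
  have : Nontrivial (Fin n) := Fin.nontrivial_iff_two_le.2 hn
  obtain ⟨col, hcol⟩ := hfs n G hG
  have : Nonempty (Fin f) := ⟨col ⟨0, by omega⟩⟩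
  obtain ⟨c, hc⟩ := Fintype.exists_card_le_mul_card_fiber col
  rw [Fintype.card_fin f] at hc
  have hclass : HasConnectionModel (G.induce ↑({v | col v = c} : Finset (Fin n))) s s := by
    have hset : {v | col v ∈ ({c} : Finset (Fin f))} = ↑({v | col v = c} : Finset (Fin n)) := by
      ext v
      simp
    exact hset ▸ hcol {c} (card_singleton c).le
  have hk : 0 < 4 * (2 * s) ^ s := by simp [Nat.pos_iff_ne_zero]
  have hpair : G.HasHomogeneousPair (k + 1) :=
    (hasHomogeneousPair_of_induce hk hc fun _ => hclass.hasHomogeneousPair).mono k.le_succ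
  obtain ⟨A, B, ⟨hAB, hhom⟩, hA, hB⟩ := hpair
  rw [Fintype.card_fin] at hA hB
  refine ⟨A, B, hAB, ?_, ?_, hhom⟩ <;> rw [inv_mul_le_iff₀ (by positivity)] <;> exact_mod_cast ‹_›
end
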